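/- arXiv:2005.08316 — 8 statements merged into one kernel-verified Lean document; each statement's English description precedes it below -/
import Mathlib

section
/- For real t > 0, the infinite series identity 2t·∑_{k=1}^∞ 1/(t² + 4k²π²) = 1/(e^t − 1) − 1/t + 1/2 holds. -/
/-!
Put `x = i t / (2π)` into the Mittag-Leffler expansion
`π cot (π x) - 1 / x = ∑_{n ≥ 1} (1 / (x - n) + 1 / (x + n))`.
Then `π cot (i t / 2) = -π i (e^t + 1) / (e^t - 1)`, and the `n`-th term becomes
`-2π i · 2t / (t² + 4n²π²)`. Dividing by `-2π i` and using
`(e^t + 1) / (2 (e^t - 1)) = 1 / (e^t - 1) + 1 / 2` gives the identity.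
-/

open Real Complex

theorem hasSum_cotTerm {x : ℂ} (hx : x ∈ integerComplement) :
    HasSum (cotTerm x) (π * cot (π * x) - 1 / x) := by
  rw [cot_series_rep' hx]
  exact (summable_cotTerm hx).hasSum

theorem Complex.I_mul_ofReal_mem_integerComplement {y : ℝ} (hy : y ≠ 0) :
    I * y ∈ integerComplement := by
  rintro ⟨n, hn⟩
  exact hy (by simpa using (congrArg im hn).symm)

theorem Complex.exp_ofReal_sub_one_ne_zero {t : ℝ} (ht : t ≠ 0) : exp t - 1 ≠ 0 := by
  rw [← ofReal_exp]
  exact_mod_cast sub_ne_zero.mpr (by simpa using ht)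

theorem Complex.cot_I_mul_ofReal_div_two {t : ℝ} (ht : t ≠ 0) :
    cot (I * t / 2) = -I * ((Real.exp t + 1) / (Real.exp t - 1) : ℝ) := by
  have hexp := exp_ofReal_sub_one_ne_zero ht
  rw [cot_eq_exp_ratio, show 2 * I * (I * t / 2) = -(t : ℂ) by ring_nf; simp [I_sq],
    Complex.exp_neg]
  push_cast
  field_simp
  rw [I_sq]
  ring

theorem cotTerm_I_mul_ofReal_div_two_pi (t : ℝ) (n : ℕ) :
    cotTerm (I * t / (2 * π)) n
      = -2 * π * I * ((2 * t / (t ^ 2 + 4 * ((n : ℝ) + 1) ^ 2 * π ^ 2) : ℝ) : ℂ) := by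
  have hD : (t : ℂ) ^ 2 + π ^ 2 * (n + 1) ^ 2 * 4 ≠ 0 := by
    exact_mod_cast (by positivity : 0 < t ^ 2 + π ^ 2 * ((n : ℝ) + 1) ^ 2 * 4).ne'
  have h₁ : I * t - 2 * π * (n + 1) ≠ 0 := fun h => by
    simpa [pi_ne_zero, n.cast_add_one_ne_zero] using congrArg re h
  have h₂ : I * t + 2 * π * (n + 1) ≠ 0 := fun h => by
    simpa [pi_ne_zero, n.cast_add_one_ne_zero] using congrArg re h
  simp only [cotTerm]
  push_cast
  field_simp
  linear_combination (exp := 1) (2 * I * t ^ 3) * I_sq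

theorem Real.hasSum_partialFraction_inv_exp_sub_one {t : ℝ} (ht : t ≠ 0) :
    HasSum (fun k : ℕ => 2 * t / (t ^ 2 + 4 * ((k : ℝ) + 1) ^ 2 * π ^ 2))
      (1 / (Real.exp t - 1) - 1 / t + 1 / 2) := by
  have hx : I * t / (2 * π) ∈ integerComplement := by
    simpa [mul_div_assoc] using
      I_mul_ofReal_mem_integerComplement (div_ne_zero ht (by positivity : 2 * π ≠ 0))
  have hπx : (π : ℂ) * (I * t / (2 * π)) = I * t / 2 := by
    field_simp
  have hvalue : π * (-I * ((Real.exp t + 1) / (Real.exp t - 1) : ℝ)) - 1 / (I * t / (2 * π))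
      = -2 * π * I * ((1 / (Real.exp t - 1) - 1 / t + 1 / 2 : ℝ) : ℂ) := by
    have hexp := exp_ofReal_sub_one_ne_zero ht
    push_cast
    field_simp
    rw [I_sq]
    field_simp
    ring
  have key := hasSum_cotTerm hx
  rw [funext (cotTerm_I_mul_ofReal_div_two_pi t), hπx, cot_I_mul_ofReal_div_two ht, hvalue,
    hasSum_mul_left_iff (by simp [pi_ne_zero])] at key
  exact Complex.hasSum_ofReal.mp key

/-- For `t > 0`, `2t·∑_{k=1}^∞ 1/(t² + 4k²π²) = 1/(e^t − 1) − 1/t + 1/2`. -/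
theorem partial_fraction_series (t : ℝ) (ht : 0 < t) :
    2 * t * ∑' k : ℕ, 1 / (t ^ 2 + 4 * ((k : ℝ) + 1) ^ 2 * π ^ 2)
      = 1 / (Real.exp t - 1) - 1 / t + 1 / 2 := by
  rw [← tsum_mul_left]
  simpa only [mul_one_div] using (Real.hasSum_partialFraction_inv_exp_sub_one ht.ne').tsum_eq
end

section
/- For complex w, ∫₀^∞ e^{−v²} sin(wv)/v dv = (π/2)·erf(w/2), where erf(w) = (2/√π)∫₀^w e^{−t²} dt. -/
open Real MeasureTheory Set

/-- The error function extended to complex argument via its entire power series. -/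
noncomputable def cerf (w : ℂ) : ℂ :=
  (2 / (Real.sqrt π : ℂ)) * ∑' n : ℕ, (-1)^n * w^(2*n+1) / ((n.factorial : ℂ) * (2*n+1))

lemma moment (n : ℕ) :
    ∫ v in Ioi (0:ℝ), v ^ (2*n) * Real.exp (-v^2) = Real.Gamma (n + 1/2) / 2 := by
  have h := integral_rpow_mul_exp_neg_rpow (p := 2) (q := 2*n) two_pos
    ((by norm_num : (-1:ℝ) < 0).trans_le (by positivity))
  rw [show ((2*(n:ℝ))+1)/2 = n + 1/2 by ring, one_div, inv_mul_eq_div,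
    eq_div_iff (two_ne_zero)] at h
  rw [eq_div_iff (two_ne_zero : (2:ℝ) ≠ 0), show (1:ℝ)/2 = 2⁻¹ from one_div 2, ← h]
  congr 1
  refine setIntegral_congr_fun measurableSet_Ioi (fun v hv => ?_)
  rw [← Real.rpow_natCast v (2*n), ← Real.rpow_natCast v 2]
  push_cast
  ring_nf

lemma gamma_half (n : ℕ) :
    Real.Gamma (n + 1/2) = (2*n).factorial * Real.sqrt π / (4^n * n.factorial) := by
  induction n with
  | zero => simpa using Real.Gamma_one_half_eq
  | succ n ih =>
    have h1 : ((n:ℝ)+1) + 1/2 = (n + 1/2) + 1 := by ring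
    push_cast
    rw [h1, Real.Gamma_add_one (by positivity), ih]
    rw [show 2*(n+1) = (2*n+1)+1 by ring, Nat.factorial_succ, Nat.factorial_succ,
      Nat.factorial_succ]
    push_cast
    have h2 : (4:ℝ)^n ≠ 0 := by positivity
    have h3 : (n.factorial : ℝ) ≠ 0 := Nat.cast_ne_zero.mpr n.factorial_ne_zero
    field_simp
    ring

/-- For complex `w`, `∫₀^∞ e^{−v²} sin(wv)/v dv = (π/2)·erf(w/2)`. -/
theorem erf_integral (w : ℂ) :
    ∫ v in Ioi (0:ℝ), (Real.exp (-v^2) : ℂ) * Complex.sin (w * v) / (v:ℂ)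
      = ((π:ℂ) / 2) * cerf (w / 2) := by
  set c : ℕ → ℂ := fun n => (-1)^n * w^(2*n+1) / (((2*n+1).factorial : ℕ) : ℂ) with hc
  set F : ℕ → ℝ → ℂ := fun n v => c n * ((v^(2*n) * Real.exp (-v^2) : ℝ) : ℂ) with hF
  have hreal : ∀ n : ℕ, IntegrableOn (fun v : ℝ => v^(2*n) * Real.exp (-v^2)) (Ioi 0) := by
    intro n
    have := integrableOn_rpow_mul_exp_neg_mul_sq (b := 1) one_pos
      (s := (2*n : ℝ)) ((by norm_num : (-1:ℝ) < 0).trans_le (by positivity))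
    refine (this.congr_fun (fun v hv => ?_) measurableSet_Ioi)
    rw [← Real.rpow_natCast v (2*n)]
    push_cast
    simp [one_mul]
  have hFint : ∀ n, Integrable (F n) (volume.restrict (Ioi (0:ℝ))) := fun n =>
    ((hreal n).ofReal).const_mul _
  have hnormc : ∀ n, ‖c n‖ = ‖w‖^(2*n+1) / ((2*n+1).factorial : ℝ) := by
    intro n
    simp [hc, norm_div, norm_mul, norm_pow]
  have hnorm : ∀ n, ∫ v, ‖F n v‖ ∂(volume.restrict (Ioi (0:ℝ)))
      = ‖c n‖ * (Real.Gamma (n + 1/2) / 2) := by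
    intro n
    rw [← moment n, ← integral_const_mul]
    refine setIntegral_congr_fun measurableSet_Ioi (fun v hv => ?_)
    rw [hF]
    rw [norm_mul, Complex.norm_real, Real.norm_eq_abs, abs_mul, abs_pow, abs_of_pos hv,
      Real.abs_exp]
  have hsummable : Summable (fun n => ∫ v, ‖F n v‖ ∂(volume.restrict (Ioi (0:ℝ)))) := by
    refine Summable.of_nonneg_of_le (fun n => ?_) (fun n => ?_)
      (((Real.summable_pow_div_factorial (‖w‖^2/4)).mul_left (Real.sqrt π / 2 * ‖w‖)))
    · exact integral_nonneg (fun v => norm_nonneg _)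
    · rw [hnorm n, hnormc n, gamma_half n]
      have hfac : ((2*n+1).factorial : ℝ) = (2*n+1) * ((2*n).factorial : ℝ) := by
        exact_mod_cast Nat.factorial_succ (2*n)
      have h1 : ((2*n).factorial : ℝ) ≠ 0 := Nat.cast_ne_zero.mpr (Nat.factorial_ne_zero _)
      have h2 : ((n).factorial : ℝ) ≠ 0 := Nat.cast_ne_zero.mpr (Nat.factorial_ne_zero _)
      have h3 : (4:ℝ)^n ≠ 0 := by positivity
      have h4 : ((2*n:ℝ)+1) ≠ 0 := by positivity
      have key : ‖w‖^(2*n+1) / ((2*n+1).factorial : ℝ) *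
          (((2*n).factorial : ℝ) * Real.sqrt π / (4^n * n.factorial) / 2)
          = (Real.sqrt π / 2 * ‖w‖) * ((‖w‖^2/4)^n / n.factorial) * (1/((2*n:ℝ)+1)) := by
        rw [hfac, pow_succ, pow_mul, div_pow]
        field_simp
      rw [key]
      have hA : (0:ℝ) ≤ (Real.sqrt π / 2 * ‖w‖) * ((‖w‖^2/4)^n / n.factorial) := by positivity
      calc (Real.sqrt π / 2 * ‖w‖) * ((‖w‖^2/4)^n / n.factorial) * (1/((2*n:ℝ)+1))
          ≤ (Real.sqrt π / 2 * ‖w‖) * ((‖w‖^2/4)^n / n.factorial) * 1 := by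
            refine mul_le_mul_of_nonneg_left ?_ hA
            rw [div_le_one (by positivity)]
            linarith [Nat.cast_nonneg (α := ℝ) n]
        _ = _ := mul_one _
  have step1 : ∫ v in Ioi (0:ℝ), (Real.exp (-v^2) : ℂ) * Complex.sin (w * v) / (v:ℂ)
      = ∫ v in Ioi (0:ℝ), ∑' n, F n v := by
    refine setIntegral_congr_fun measurableSet_Ioi (fun v hv => ?_)
    have hv0 : (0:ℝ) < v := hv
    have hvC : (v:ℂ) ≠ 0 := by exact_mod_cast hv0.ne'
    have hs := (((Complex.hasSum_sin (w*v)).mul_left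
      ((Real.exp (-v^2) : ℝ) : ℂ)).div_const (v:ℂ))
    rw [← hs.tsum_eq]
    refine tsum_congr (fun n => ?_)
    rw [div_eq_iff hvC, hF, hc]
    push_cast
    rw [mul_pow, pow_succ]
    ring
  rw [step1, ← integral_tsum_of_summable_integral_norm hFint hsummable]
  have step2 : ∀ n, ∫ v, F n v ∂(volume.restrict (Ioi (0:ℝ)))
      = c n * ((Real.Gamma (n + 1/2) / 2 : ℝ) : ℂ) := by
    intro n
    rw [hF, integral_const_mul]
    congr 1
    rw [← moment n]
    exact integral_ofReal
  simp_rw [step2]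
  -- now the series identity
  have hsq : ((Real.sqrt π : ℂ)) * (Real.sqrt π : ℂ) = (π : ℂ) := by
    exact_mod_cast congrArg (Complex.ofReal) (Real.mul_self_sqrt pi_pos.le)
  have hsne : (Real.sqrt π : ℂ) ≠ 0 := by
    exact_mod_cast Complex.ofReal_ne_zero.mpr (Real.sqrt_ne_zero'.mpr pi_pos)
  have term : ∀ n : ℕ, c n * ((Real.Gamma (n + 1/2) / 2 : ℝ) : ℂ)
      = (Real.sqrt π : ℂ) * ((-1)^n * (w/2)^(2*n+1) / ((n.factorial : ℂ) * (2*n+1))) := by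
    intro n
    simp only [hc]
    rw [gamma_half n]
    have hfac : (((2*n+1).factorial : ℕ) : ℂ) = ((2*n:ℂ)+1) * (((2*n).factorial : ℕ) : ℂ) := by
      exact_mod_cast Nat.factorial_succ (2*n)
    have h1 : (((2*n).factorial : ℕ) : ℂ) ≠ 0 := Nat.cast_ne_zero.mpr (Nat.factorial_ne_zero _)
    have h2 : ((n.factorial : ℕ) : ℂ) ≠ 0 := Nat.cast_ne_zero.mpr (Nat.factorial_ne_zero _)
    have h3 : (4:ℂ)^n ≠ 0 := by norm_num
    have h4 : ((2*n:ℂ)+1) ≠ 0 := by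
      intro h
      have : ((2*n:ℝ)+1) = 0 := by exact_mod_cast h
      nlinarith [Nat.cast_nonneg (α := ℝ) n]
    rw [hfac, div_pow, show ((2:ℂ))^(2*n+1) = 2 * 4^n by rw [pow_succ, pow_mul]; ring]
    push_cast
    field_simp
  simp_rw [term]
  rw [tsum_mul_left, cerf, ← mul_assoc]
  congr 1
  rw [← hsq]
  field_simp
end

section
/- Let Re(s) > 0, n a positive real, and a a real number with a > 1. Then (4/(√π Γ((1+s)/2))) ∫₀^∞ ∫₀^∞ (uv)^s e^{−(u²+v²)} / (n²u² + (a−1)²v²)^{s/2} du dv = (n + a − 1)^{−s}. -/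
/-!
With `c = a - 1`, the identity `(uv)^s (n²u² + c²v²)^(-s/2) = (n²/v² + c²/u²)^(-s/2)` and the
Gamma integral for `X^(-s/2)` turn the integrand into
`Γ(s/2)⁻¹ ∫₀^∞ t^(s/2-1) e^(-(u² + c²t/u²)) e^(-(v² + n²t/v²)) dt`.
After exchanging the order of integration, the `u`- and `v`-integrals are Cauchy–Schlömilch
integrals `∫₀^∞ e^(-(x² + β²/x²)) dx = (√π/2) e^(-2β)` with `β = c√t` and `β = n√t`, leaving
`Γ(s/2)⁻¹ (π/4) ∫₀^∞ t^(s/2-1) e^(-2(n+c)√t) dt = Γ(s/2)⁻¹ (π/4) · 2 Γ(s) (2(n+c))^(-s)`,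
which Legendre's duplication formula turns into `(√π/4) Γ((1+s)/2) (n+c)^(-s)`.
The Cauchy–Schlömilch integral follows from the substitution `y = x - β/x` together with the
symmetry of the integrand under `x ↦ β/x`.
-/

open Real MeasureTheory Set

section Substitution

variable {E : Type*} [NormedAddCommGroup E] [NormedSpace ℝ E] {β : ℝ}

lemma image_sub_div_Ioi (hβ : 0 < β) : (fun x : ℝ => x - β / x) '' Ioi 0 = univ := by
  refine eq_univ_of_forall fun y => ?_
  -- the positive root of `x² - y x - β = 0`
  set r := √(y ^ 2 + 4 * β)
  have hr : r ^ 2 = y ^ 2 + 4 * β := sq_sqrt (by positivity)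
  have hyr : |y| < r := by
    rw [← sqrt_sq_eq_abs]; exact sqrt_lt_sqrt (sq_nonneg y) (by linarith)
  have hx : 0 < (y + r) / 2 := by linarith [neg_abs_le y]
  have hdiv : β / ((y + r) / 2) = (r - y) / 2 := by
    rw [div_eq_iff hx.ne']; nlinarith
  refine ⟨(y + r) / 2, hx, ?_⟩
  simp only [hdiv]
  ring

lemma image_const_div_Ioi (hβ : 0 < β) : (fun x : ℝ => β / x) '' Ioi 0 = Ioi 0 := by
  ext y
  refine ⟨fun ⟨x, hx, hxy⟩ => hxy ▸ div_pos hβ hx, fun hy => ⟨β / y, div_pos hβ hy, ?_⟩⟩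
  field_simp

lemma hasDerivAt_const_div (β : ℝ) {x : ℝ} (hx : x ≠ 0) :
    HasDerivAt (fun x : ℝ => β / x) (-(β / x ^ 2)) x := by
  simpa [div_eq_mul_inv] using (hasDerivAt_inv hx).const_mul β

lemma integral_Ioi_one_add_div_sq_smul_comp_sub_div (hβ : 0 < β) (g : ℝ → E) :
    ∫ x in Ioi 0, (1 + β / x ^ 2) • g (x - β / x) = ∫ y, g y := by
  have hderiv : ∀ x ∈ Ioi (0 : ℝ),
      HasDerivWithinAt (fun x => x - β / x) (1 + β / x ^ 2) (Ioi 0) x := fun x hx =>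
    (((hasDerivAt_id x).sub (hasDerivAt_const_div β (ne_of_gt hx))).congr_deriv
      (by simp)).hasDerivWithinAt
  have hinj : InjOn (fun x : ℝ => x - β / x) (Ioi 0) := by
    refine StrictMonoOn.injOn fun x hx y _ hxy => ?_
    have := div_lt_div_of_pos_left hβ hx hxy
    show x - β / x < y - β / y
    linarith
  conv_rhs => rw [← setIntegral_univ, ← image_sub_div_Ioi hβ,
    integral_image_eq_integral_abs_deriv_smul measurableSet_Ioi hderiv hinj]
  refine setIntegral_congr_fun measurableSet_Ioi fun x hx => ?_
  rw [abs_of_pos (by have := mem_Ioi.mp hx; positivity)]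

lemma hasDerivWithinAt_const_div_Ioi (β : ℝ) :
    ∀ x ∈ Ioi (0 : ℝ), HasDerivWithinAt (fun x => β / x) (-(β / x ^ 2)) (Ioi 0) x :=
  fun _ hx => (hasDerivAt_const_div β (ne_of_gt hx)).hasDerivWithinAt

lemma injOn_const_div_Ioi (hβ : 0 < β) : InjOn (fun x : ℝ => β / x) (Ioi 0) :=
  StrictAntiOn.injOn fun _ hx _ _ hxy => div_lt_div_of_pos_left hβ hx hxy

lemma abs_neg_div_sq (hβ : 0 < β) {x : ℝ} (hx : x ∈ Ioi 0) : |-(β / x ^ 2)| = β / x ^ 2 := by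
  rw [abs_neg, abs_of_pos (by have := mem_Ioi.mp hx; positivity)]

lemma integral_Ioi_div_sq_smul_comp_div (hβ : 0 < β) (g : ℝ → E) :
    ∫ x in Ioi 0, (β / x ^ 2) • g (β / x) = ∫ x in Ioi 0, g x := by
  conv_rhs => rw [← image_const_div_Ioi hβ, integral_image_eq_integral_abs_deriv_smul
    measurableSet_Ioi (hasDerivWithinAt_const_div_Ioi β) (injOn_const_div_Ioi hβ)]
  exact setIntegral_congr_fun measurableSet_Ioi fun x hx => by rw [abs_neg_div_sq hβ hx]

lemma integrableOn_Ioi_div_sq_smul_comp_div_iff (hβ : 0 < β) (g : ℝ → E) :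
    IntegrableOn (fun x => (β / x ^ 2) • g (β / x)) (Ioi 0) ↔ IntegrableOn g (Ioi 0) := by
  conv_rhs => rw [← image_const_div_Ioi hβ, integrableOn_image_iff_integrableOn_abs_deriv_smul
    measurableSet_Ioi (hasDerivWithinAt_const_div_Ioi β) (injOn_const_div_Ioi hβ)]
  exact integrableOn_congr_fun (fun x hx => by simp only [abs_neg_div_sq hβ hx]) measurableSet_Ioi

end Substitution

lemma integrableOn_exp_neg_sq_add_div_sq {γ : ℝ} (hγ : 0 ≤ γ) :
    IntegrableOn (fun x : ℝ => rexp (-(x ^ 2 + γ / x ^ 2))) (Ioi 0) := by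
  refine (integrable_exp_neg_mul_sq one_pos).integrableOn.mono' (by fun_prop)
    (Filter.Eventually.of_forall fun x => ?_)
  rw [norm_of_nonneg (exp_pos _).le, exp_le_exp]
  have : 0 ≤ γ / x ^ 2 := by positivity
  linarith

theorem integral_exp_neg_sq_add_sq_div_sq {β : ℝ} (hβ : 0 < β) :
    ∫ x in Ioi 0, rexp (-(x ^ 2 + β ^ 2 / x ^ 2)) = √π / 2 * rexp (-(2 * β)) := by
  set f : ℝ → ℝ := fun x => rexp (-(x ^ 2 + β ^ 2 / x ^ 2))
  have hf_inv : ∀ x ∈ Ioi (0 : ℝ), f (β / x) = f x := fun x hx => by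
    have := mem_Ioi.mp hx
    simp only [f]; congr 2; field_simp; ring
  have hf_sub : ∀ x ∈ Ioi (0 : ℝ), rexp (-(x - β / x) ^ 2) = rexp (2 * β) * f x := fun x hx => by
    have := mem_Ioi.mp hx
    rw [← exp_add]; congr 1; field_simp; ring
  have hf : IntegrableOn f (Ioi 0) := integrableOn_exp_neg_sq_add_div_sq (sq_nonneg β)
  have hf' : IntegrableOn (fun x => β / x ^ 2 * f x) (Ioi 0) :=
    ((integrableOn_Ioi_div_sq_smul_comp_div_iff hβ f).mpr hf).congr_fun
      (fun x hx => by simp only [smul_eq_mul, hf_inv x hx]) measurableSet_Ioi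
  have hsplit : ∫ x in Ioi 0, β / x ^ 2 * f x = ∫ x in Ioi 0, f x := by
    rw [← integral_Ioi_div_sq_smul_comp_div hβ f]
    exact setIntegral_congr_fun measurableSet_Ioi fun x hx => by
      simp only [smul_eq_mul, hf_inv x hx]
  have hgauss : √π = rexp (2 * β) * (2 * ∫ x in Ioi 0, f x) := calc
    √π = ∫ y, rexp (-y ^ 2) := by simpa using (integral_gaussian 1).symm
    _ = ∫ x in Ioi 0, (1 + β / x ^ 2) * rexp (-(x - β / x) ^ 2) :=
      (integral_Ioi_one_add_div_sq_smul_comp_sub_div hβ _).symm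
    _ = rexp (2 * β) * ((∫ x in Ioi 0, f x) + ∫ x in Ioi 0, β / x ^ 2 * f x) := by
      rw [← integral_add hf hf', ← integral_const_mul]
      exact setIntegral_congr_fun measurableSet_Ioi fun x hx => by rw [hf_sub x hx]; ring
    _ = rexp (2 * β) * (2 * ∫ x in Ioi 0, f x) := by rw [hsplit]; ring
  rw [hgauss, exp_neg]
  field_simp

lemma cpow_neg_eq_inv_Gamma_mul_integral {w : ℂ} (hw : 0 < w.re) {X : ℝ} (hX : 0 < X) :
    (X : ℂ) ^ (-w) =
      (Complex.Gamma w)⁻¹ * ∫ t in Ioi (0 : ℝ), (t : ℂ) ^ (w - 1) * (rexp (-(X * t)) : ℂ) := by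
  have hGamma := Complex.integral_cpow_mul_exp_neg_mul_Ioi hw hX
  push_cast
  rw [hGamma, one_div, Complex.inv_cpow_ofReal_nonneg hX.le, Complex.cpow_neg,
    mul_comm _ (Complex.Gamma w), inv_mul_cancel_left₀ (Complex.Gamma_ne_zero_of_re_pos hw)]

lemma integral_cpow_mul_exp_neg_mul_sqrt {s : ℂ} (hs : 0 < s.re) {r : ℝ} (hr : 0 < r) :
    ∫ t in Ioi (0 : ℝ), (t : ℂ) ^ (s / 2 - 1) * (rexp (-(r * √t)) : ℂ) =
      2 * Complex.Gamma s * (r : ℂ) ^ (-s) := by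
  have hGamma := Complex.integral_cpow_mul_exp_neg_mul_Ioi hs hr
  rw [one_div, Complex.inv_cpow_ofReal_nonneg hr.le, ← Complex.cpow_neg] at hGamma
  rw [← integral_comp_rpow_Ioi_of_pos two_pos, mul_assoc, mul_comm (Complex.Gamma s), ← hGamma,
    ← integral_const_mul]
  refine setIntegral_congr_fun measurableSet_Ioi fun x hx => ?_
  have hx0 : 0 < x := hx
  have hpow : ((x ^ (2 : ℝ) : ℝ) : ℂ) ^ (s / 2 - 1) * x = (x : ℂ) ^ (s - 1) := by
    conv_rhs => rw [show s - 1 = (2 : ℝ) * (s / 2 - 1) + 1 by push_cast; ring]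
    rw [← Complex.cpow_mul_ofReal_nonneg hx0.le, Complex.cpow_add _ _ (by exact_mod_cast hx0.ne'),
      Complex.cpow_one]
  have hsqrt : √(x ^ (2 : ℝ)) = x := by rw [rpow_two, sqrt_sq hx0.le]
  rw [hsqrt, ← hpow, Complex.real_smul, show x ^ ((2 : ℝ) - 1) = x by norm_num]
  push_cast
  ring

lemma integral_rpow_mul_exp_neg_sq_add_mul_div_sq {p γ x : ℝ} (hp : 0 < p) (hγ : 0 < γ)
    (hx : 0 < x) :
    ∫ t in Ioi (0 : ℝ), t ^ (p - 1) * rexp (-(x ^ 2 + γ * t / x ^ 2)) =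
      Real.Gamma p / γ ^ p * (x ^ (2 * p) * rexp (-x ^ 2)) := by
  have hexp : ∀ t, rexp (-(x ^ 2 + γ * t / x ^ 2)) = rexp (-x ^ 2) * rexp (-(γ / x ^ 2 * t)) :=
    fun t => by rw [← exp_add]; ring_nf
  simp_rw [hexp, mul_left_comm _ (rexp (-x ^ 2))]
  rw [integral_const_mul, integral_rpow_mul_exp_neg_mul_Ioi hp (by positivity), one_div_div,
    div_rpow (by positivity) hγ.le, ← rpow_natCast, ← rpow_mul hx.le]
  push_cast
  ring

lemma integrable_rpow_mul_exp_neg_sq_add_mul_div_sq {p γ : ℝ} (hp : 0 < p) (hγ : 0 < γ) :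
    Integrable (fun z : ℝ × ℝ => z.2 ^ (p - 1) * rexp (-(z.1 ^ 2 + γ * z.2 / z.1 ^ 2)))
      ((volume.restrict (Ioi 0)).prod (volume.restrict (Ioi 0))) := by
  refine (integrable_prod_iff (by fun_prop)).mpr ⟨?_, ?_⟩
  · filter_upwards [ae_restrict_mem measurableSet_Ioi] with x hx
    -- a nonzero Bochner integral forces integrability
    refine Integrable.of_integral_ne_zero ?_
    rw [integral_rpow_mul_exp_neg_sq_add_mul_div_sq hp hγ hx]
    exact (mul_pos (div_pos (Real.Gamma_pos_of_pos hp) (rpow_pos_of_pos hγ p))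
      (mul_pos (rpow_pos_of_pos hx _) (exp_pos _))).ne'
  · refine IntegrableOn.congr_fun ((integrableOn_rpow_mul_exp_neg_mul_sq one_pos
      (by linarith : -1 < 2 * p)).const_mul (Real.Gamma p / γ ^ p)) (fun x hx => ?_)
      measurableSet_Ioi
    rw [neg_mul, one_mul, ← integral_rpow_mul_exp_neg_sq_add_mul_div_sq hp hγ hx]
    refine setIntegral_congr_fun measurableSet_Ioi fun t ht => ?_
    have := mem_Ioi.mp ht
    rw [norm_of_nonneg (by positivity)]

section Fubini

variable {w : ℂ} {φ : ℝ → ℂ}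

lemma integrable_cpow_mul_exp_neg_sq_add_mul_div_sq (hw : 0 < w.re) {γ : ℝ} (hγ : 0 < γ)
    (hφ : Measurable φ) (hφ_le : ∀ t > 0, ‖φ t‖ ≤ 1) :
    Integrable (fun z : ℝ × ℝ =>
        (z.2 : ℂ) ^ (w - 1) * φ z.2 * (rexp (-(z.1 ^ 2 + γ * z.2 / z.1 ^ 2)) : ℂ))
      ((volume.restrict (Ioi 0)).prod (volume.restrict (Ioi 0))) := by
  have hpos : ∀ᵐ z ∂(volume.restrict (Ioi (0 : ℝ))).prod (volume.restrict (Ioi (0 : ℝ))),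
      0 < z.2 := by
    rw [Measure.prod_restrict]
    filter_upwards [ae_restrict_mem (measurableSet_Ioi.prod measurableSet_Ioi)] with z hz using hz.2
  refine (integrable_rpow_mul_exp_neg_sq_add_mul_div_sq hw hγ).mono' ?_ ?_
  · fun_prop
  filter_upwards [hpos] with z hz
  rw [norm_mul, norm_mul, Complex.norm_cpow_eq_rpow_re_of_pos hz, Complex.norm_real,
    norm_of_nonneg (exp_pos _).le, Complex.sub_re, Complex.one_re]
  conv_rhs => rw [← mul_one (z.2 ^ (w.re - 1))]
  gcongr
  exact hφ_le z.2 hz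

theorem integral_integral_cpow_mul_exp_neg_sq_add_sq_mul_div_sq (hw : 0 < w.re) {β : ℝ}
    (hβ : 0 < β) (hφ : Measurable φ) (hφ_le : ∀ t > 0, ‖φ t‖ ≤ 1) :
    ∫ x in Ioi (0 : ℝ), ∫ t in Ioi (0 : ℝ),
        (t : ℂ) ^ (w - 1) * φ t * (rexp (-(x ^ 2 + β ^ 2 * t / x ^ 2)) : ℂ) =
      (√π / 2 : ℝ) * ∫ t in Ioi (0 : ℝ), (t : ℂ) ^ (w - 1) * φ t * (rexp (-(2 * β * √t)) : ℂ) := by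
  rw [integral_integral_swap (integrable_cpow_mul_exp_neg_sq_add_mul_div_sq hw (pow_pos hβ 2)
    hφ hφ_le), ← integral_const_mul]
  refine setIntegral_congr_fun measurableSet_Ioi fun t ht => ?_
  have hx_integral : ∫ x in Ioi (0 : ℝ), rexp (-(x ^ 2 + β ^ 2 * t / x ^ 2)) =
      √π / 2 * rexp (-(2 * β * √t)) := by
    have := integral_exp_neg_sq_add_sq_div_sq (mul_pos hβ (sqrt_pos.2 ht))
    rwa [mul_pow, sq_sqrt (le_of_lt ht), ← mul_assoc] at this
  rw [integral_const_mul, integral_complex_ofReal, hx_integral]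
  push_cast
  ring

end Fubini

lemma ofReal_cpow_div_sq_mul_cpow_half {P X : ℝ} (hP : 0 < P) (hX : 0 < X) (s : ℂ) :
    (P : ℂ) ^ s / ((P ^ 2 * X : ℝ) : ℂ) ^ (s / 2) = (X : ℂ) ^ (-(s / 2)) := by
  have hPs : ((P ^ 2 : ℝ) : ℂ) ^ (s / 2) = (P : ℂ) ^ s := by
    rw [← rpow_two, ← Complex.cpow_mul_ofReal_nonneg hP.le]
    push_cast; ring_nf
  rw [Complex.ofReal_mul, Complex.mul_cpow_ofReal_nonneg (by positivity) hX.le, hPs,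
    div_mul_cancel_left₀ (by simp [hP.ne']), Complex.cpow_neg]

lemma Complex.Gamma_mul_two_cpow_neg_mul_sqrt_pi (s : ℂ) :
    2 * Complex.Gamma s * 2 ^ (-s) * √π =
      Complex.Gamma (s / 2) * Complex.Gamma ((1 + s) / 2) := by
  have hdup := Complex.Gamma_mul_Gamma_add_half (s / 2)
  rw [show 2 * (s / 2) = s by ring, show s / 2 + 1 / 2 = (1 + s) / 2 by ring,
    Complex.cpow_sub _ _ two_ne_zero, Complex.cpow_one] at hdup
  rw [hdup, Complex.cpow_neg]
  ring

section Kernel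

variable {s : ℂ} {n c : ℝ}

lemma cpow_mul_exp_div_cpow_half_eq_integral (hs : 0 < s.re) (hn : 0 < n) (hc : 0 < c)
    {u v : ℝ} (hu : 0 < u) (hv : 0 < v) :
    ((u * v : ℝ) : ℂ) ^ s * (rexp (-(u ^ 2 + v ^ 2)) : ℂ) /
        ((n ^ 2 * u ^ 2 + c ^ 2 * v ^ 2 : ℝ) : ℂ) ^ (s / 2) =
      (Complex.Gamma (s / 2))⁻¹ * (rexp (-v ^ 2) : ℂ) * ∫ t in Ioi (0 : ℝ),
        (t : ℂ) ^ (s / 2 - 1) * (rexp (-(n ^ 2 / v ^ 2 * t)) : ℂ) *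
          (rexp (-(u ^ 2 + c ^ 2 * t / u ^ 2)) : ℂ) := by
  set X := n ^ 2 / v ^ 2 + c ^ 2 / u ^ 2
  have hX : 0 < X := by positivity
  have hw : 0 < (s / 2).re := by simpa using hs
  have hD : n ^ 2 * u ^ 2 + c ^ 2 * v ^ 2 = (u * v) ^ 2 * X := by simp only [X]; field_simp
  rw [hD, mul_div_right_comm, ofReal_cpow_div_sq_mul_cpow_half (by positivity) hX,
    cpow_neg_eq_inv_Gamma_mul_integral hw hX, mul_assoc, mul_assoc]
  congr 1
  rw [← integral_mul_const, ← integral_const_mul]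
  refine setIntegral_congr_fun measurableSet_Ioi fun t _ => ?_
  have hexp : rexp (-(X * t)) * rexp (-(u ^ 2 + v ^ 2)) =
      rexp (-v ^ 2) * (rexp (-(n ^ 2 / v ^ 2 * t)) * rexp (-(u ^ 2 + c ^ 2 * t / u ^ 2))) := by
    simp only [← exp_add]; congr 1; ring
  rw [mul_assoc, ← Complex.ofReal_mul, hexp]
  push_cast
  ring

lemma norm_ofReal_exp_neg_le_one {x : ℝ} (hx : 0 ≤ x) : ‖(rexp (-x) : ℂ)‖ ≤ 1 := by
  rwa [Complex.norm_real, norm_of_nonneg (exp_pos _).le, exp_le_one_iff, neg_nonpos]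

lemma integral_cpow_mul_exp_div_cpow_half (hs : 0 < s.re) (hn : 0 < n) (hc : 0 < c) {v : ℝ}
    (hv : 0 < v) :
    ∫ u in Ioi (0 : ℝ), ((u * v : ℝ) : ℂ) ^ s * (rexp (-(u ^ 2 + v ^ 2)) : ℂ) /
        ((n ^ 2 * u ^ 2 + c ^ 2 * v ^ 2 : ℝ) : ℂ) ^ (s / 2) =
      (Complex.Gamma (s / 2))⁻¹ * (√π / 2 : ℝ) * (rexp (-v ^ 2) : ℂ) * ∫ t in Ioi (0 : ℝ),
        (t : ℂ) ^ (s / 2 - 1) * (rexp (-(n ^ 2 / v ^ 2 * t)) : ℂ) * (rexp (-(2 * c * √t)) : ℂ) := by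
  have hw : 0 < (s / 2).re := by simpa using hs
  rw [setIntegral_congr_fun measurableSet_Ioi fun u hu =>
      cpow_mul_exp_div_cpow_half_eq_integral hs hn hc hu hv, integral_const_mul,
    integral_integral_cpow_mul_exp_neg_sq_add_sq_mul_div_sq hw hc (by fun_prop)
      fun t ht => norm_ofReal_exp_neg_le_one (by positivity)]
  ring

theorem integral_integral_cpow_mul_exp_div_cpow_half (hs : 0 < s.re) (hn : 0 < n) (hc : 0 < c) :
    ∫ v in Ioi (0 : ℝ), ∫ u in Ioi (0 : ℝ),
      ((u * v : ℝ) : ℂ) ^ s * (rexp (-(u ^ 2 + v ^ 2)) : ℂ) /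
        ((n ^ 2 * u ^ 2 + c ^ 2 * v ^ 2 : ℝ) : ℂ) ^ (s / 2) =
      √π / 4 * Complex.Gamma ((1 + s) / 2) * ((n + c : ℝ) : ℂ) ^ (-s) := by
  have hw : 0 < (s / 2).re := by simpa using hs
  set A : ℂ := ((√π / 2 : ℝ) : ℂ)
  calc _ = ∫ v in Ioi (0 : ℝ), (Complex.Gamma (s / 2))⁻¹ * A * ∫ t in Ioi (0 : ℝ),
        (t : ℂ) ^ (s / 2 - 1) * (rexp (-(2 * c * √t)) : ℂ) *
          (rexp (-(v ^ 2 + n ^ 2 * t / v ^ 2)) : ℂ) := by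
        refine setIntegral_congr_fun measurableSet_Ioi fun v hv => ?_
        rw [integral_cpow_mul_exp_div_cpow_half hs hn hc hv,
          mul_assoc _ ((rexp (-v ^ 2) : ℝ) : ℂ), ← integral_const_mul]
        congr 1
        refine setIntegral_congr_fun measurableSet_Ioi fun t _ => ?_
        have hexp : rexp (-(v ^ 2 + n ^ 2 * t / v ^ 2)) =
            rexp (-v ^ 2) * rexp (-(n ^ 2 / v ^ 2 * t)) := by
          rw [← exp_add]; ring_nf
        rw [hexp]
        push_cast
        ring
    _ = (Complex.Gamma (s / 2))⁻¹ * A * (A * ∫ t in Ioi (0 : ℝ),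
        (t : ℂ) ^ (s / 2 - 1) * (rexp (-(2 * (n + c) * √t)) : ℂ)) := by
        rw [integral_const_mul, integral_integral_cpow_mul_exp_neg_sq_add_sq_mul_div_sq hw hn
          (by fun_prop) fun t _ => norm_ofReal_exp_neg_le_one (by positivity)]
        congr 2
        refine setIntegral_congr_fun measurableSet_Ioi fun t _ => ?_
        rw [mul_assoc, ← Complex.ofReal_mul, ← exp_add]
        ring_nf
    _ = (Complex.Gamma (s / 2))⁻¹ * A *
        (A * (2 * Complex.Gamma s * ((2 * (n + c) : ℝ) : ℂ) ^ (-s))) := by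
        rw [integral_cpow_mul_exp_neg_mul_sqrt hs (by positivity)]
    _ = (Complex.Gamma (s / 2))⁻¹ * (√π / 4) * ((n + c : ℝ) : ℂ) ^ (-s) *
        (2 * Complex.Gamma s * 2 ^ (-s) * √π) := by
        rw [show ((2 * (n + c) : ℝ) : ℂ) = ((2 : ℝ) : ℂ) * ((n + c : ℝ) : ℂ) by push_cast; ring,
          Complex.mul_cpow_ofReal_nonneg zero_le_two (by positivity), Complex.ofReal_ofNat]
        simp only [A]
        push_cast
        ring
    _ = _ := by
        rw [Complex.Gamma_mul_two_cpow_neg_mul_sqrt_pi]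
        field_simp [Complex.Gamma_ne_zero_of_re_pos hw]

end Kernel

/-- For `Re(s) > 0`, `n > 0` and real `a > 1`,
`(4/(√π Γ((1+s)/2))) ∫₀^∞∫₀^∞ (uv)^s e^{−(u²+v²)}/(n²u²+(a−1)²v²)^{s/2} du dv
  = (n + a − 1)^{−s}`. -/
theorem double_integral_a_gt_one (s : ℂ) (hs : 0 < s.re) (n a : ℝ) (hn : 0 < n)
    (ha : 1 < a) :
    (4 / ((Real.sqrt π : ℂ) * Complex.Gamma ((1+s)/2))) *
      ∫ v in Ioi (0:ℝ), ∫ u in Ioi (0:ℝ),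
        ((u*v : ℝ) : ℂ) ^ s * (Real.exp (-(u^2+v^2)) : ℂ) /
          ((n^2*u^2 + (a-1)^2*v^2 : ℝ) : ℂ) ^ (s/2)
      = ((n + a - 1 : ℝ) : ℂ) ^ (-s) := by
  have hre : 0 < ((1 + s) / 2).re := by
    rw [Complex.div_ofNat_re, Complex.add_re, Complex.one_re]; linarith
  rw [integral_integral_cpow_mul_exp_div_cpow_half hs hn (sub_pos.2 ha), add_sub_assoc]
  field_simp [Complex.Gamma_ne_zero_of_re_pos hre]
end

section
/- For Re(z) > −2, complex w, and real v > 0, one has ∫₀^∞ u^z e^{−u²v²} sinh(wuv) du = (1/2) w v^{−1−z} Γ(1 + z/2) ₁F₁(1 + z/2; 3/2; w²/4). -/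
open Real MeasureTheory Set

/-- Pochhammer symbol `(a)_n`. -/
noncomputable def poch (a : ℂ) (n : ℕ) : ℂ := ∏ i ∈ Finset.range n, (a + i)

/-- Confluent hypergeometric function `₁F₁(a;c;z)`. -/
noncomputable def hyp1F1 (a c z : ℂ) : ℂ :=
  ∑' n : ℕ, poch a n / poch c n * z ^ n / (n.factorial : ℂ)

/-!
After the substitution `u = t / v` it suffices to treat `v = 1`. Expanding
`sinh (w t) = ∑ (w t)^(2n+1) / (2n+1)!` turns the integral into a series of Gaussian moments
`∫₀^∞ t^s e^{-t²} dt = Γ((s+1)/2) / 2`. Since `(2n+1)! = 4ⁿ n! (3/2)ₙ` and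
`Γ(1 + z/2 + n) = Γ(1 + z/2) (1 + z/2)ₙ`, the `n`-th moment is the `n`-th term of the `₁F₁`
series. Integral and sum may be interchanged because the integrals of the absolute values of the
terms are the same moments at `(Re z, ‖w‖)`, hence terms of a convergent `₁F₁` series.
-/

open Complex Nat

theorem ne_neg_natCast_of_re_pos {a : ℂ} (ha : 0 < a.re) (k : ℕ) : a ≠ -k := by
  rintro rfl
  simp only [neg_re, natCast_re, Left.neg_pos_iff] at ha
  linarith [(k.cast_nonneg : (0 : ℝ) ≤ k)]

theorem poch_ne_zero {a : ℂ} (ha : ∀ k : ℕ, a ≠ -k) (n : ℕ) : poch a n ≠ 0 :=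
  Finset.prod_ne_zero_iff.mpr fun i _ h ↦ ha i (eq_neg_of_add_eq_zero_left h)

theorem poch_eq_ascPochhammer_eval (a : ℂ) (n : ℕ) :
    poch a n = (ascPochhammer ℂ n).eval a := by
  induction n with
  | zero => simp [poch]
  | succ n ih => rw [poch, Finset.prod_range_succ, ← poch, ih, ascPochhammer_succ_eval]

theorem Gamma_mul_poch {a : ℂ} (ha : ∀ k : ℕ, a ≠ -k) (n : ℕ) :
    Gamma a * poch a n = Gamma (a + n) := by
  rw [poch_eq_ascPochhammer_eval, ← Gamma_add_nat_div_Gamma_eq a ha,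
    mul_div_cancel₀ _ (Gamma_ne_zero ha)]

-- The regularized series divides by `Γ (c + n)` instead of `(c)ₙ`, whence the factor `Γ c`.
theorem poch_div_poch_mul_pow_div_factorial {c : ℂ} (hc : ∀ k : ℕ, c ≠ -k) (a x : ℂ)
    (n : ℕ) :
    poch a n / poch c n * x ^ n / n ! =
      Gamma c * regularizedHGFunSeries {a} {c} n (fun _ ↦ x) := by
  rw [regularizedHGFunSeries, FormalMultilinearSeries.ofScalars_apply_eq, smul_eq_mul,
    regularizedHGFunCoeff]
  simp only [Multiset.map_singleton, Multiset.prod_singleton]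
  rw [← Gamma_mul_poch hc, poch_eq_ascPochhammer_eval, poch_eq_ascPochhammer_eval]
  have := Gamma_ne_zero hc
  field_simp

theorem summable_hyp1F1_series (a : ℂ) {c : ℂ} (hc : ∀ k : ℕ, c ≠ -k) (x : ℂ) :
    Summable fun n : ℕ ↦ poch a n / poch c n * x ^ n / n ! := by
  simp_rw [poch_div_poch_mul_pow_div_factorial hc]
  refine Summable.mul_left _ (Summable.of_norm ?_)
  refine (regularizedHGFunSeries {a} {c}).summable_norm_apply ?_
  simp [radius_regularizedHGFunSeries_eq_top]

theorem factorial_two_mul_add_one_eq (n : ℕ) :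
    (((2 * n + 1) ! : ℕ) : ℂ) = 4 ^ n * n ! * poch (3 / 2) n := by
  induction n with
  | zero => simp [poch]
  | succ n ih =>
    rw [show 2 * (n + 1) + 1 = 2 * n + 1 + 1 + 1 by ring, factorial_succ, factorial_succ,
      factorial_succ n, poch, Finset.prod_range_succ, ← poch]
    push_cast
    rw [ih]
    ring

theorem integrableOn_cpow_mul_exp_neg_mul_sq {s : ℂ} (hs : -1 < s.re) {b : ℝ} (hb : 0 < b) :
    IntegrableOn (fun t : ℝ ↦ (t : ℂ) ^ s * rexp (-(b * t ^ 2))) (Ioi 0) := by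
  refine (integrableOn_rpow_mul_exp_neg_mul_sq hb hs).congr' (by fun_prop) ?_
  refine (ae_restrict_iff' measurableSet_Ioi).mpr (.of_forall fun t (ht : 0 < t) ↦ ?_)
  rw [norm_mul, norm_mul, norm_cpow_eq_rpow_re_of_pos ht, norm_real, neg_mul,
    norm_of_nonneg (rpow_nonneg ht.le _)]

theorem integral_cpow_mul_exp_neg_mul_sq {s : ℂ} (hs : -1 < s.re) {b : ℝ} (hb : 0 < b) :
    ∫ t in Ioi (0 : ℝ), (t : ℂ) ^ s * rexp (-(b * t ^ 2)) =
      (1 / b : ℂ) ^ ((s + 1) / 2) * Gamma ((s + 1) / 2) / 2 := by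
  have hs' : 0 < ((s + 1) / 2).re := by
    simp only [div_ofNat_re, add_re, one_re, ofNat_pos, div_pos_iff_of_pos_right]
    linarith
  rw [← integral_cpow_mul_exp_neg_mul_Ioi hs' hb]
  conv_rhs => rw [← integral_comp_rpow_Ioi_of_pos two_pos, ← integral_div]
  refine setIntegral_congr_fun measurableSet_Ioi fun t (ht : 0 < t) ↦ ?_
  have hcpow : ((t ^ (2 : ℝ) : ℝ) : ℂ) ^ ((s + 1) / 2 - 1) * t = (t : ℂ) ^ s := by
    have ht' : (t : ℂ) ≠ 0 := ofReal_ne_zero.mpr ht.ne'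
    rw [← cpow_mul_ofReal_nonneg ht.le]
    nth_rw 2 [← cpow_one (t : ℂ)]
    rw [← cpow_add _ _ ht']
    congr 1
    push_cast
    ring
  rw [real_smul, ← hcpow]
  norm_num
  ring

noncomputable def gaussSinhTerm (z w : ℂ) (n : ℕ) (t : ℝ) : ℂ :=
  (t : ℂ) ^ z * rexp (-t ^ 2) * ((w * t) ^ (2 * n + 1) / (2 * n + 1)!)

theorem hasSum_gaussSinhTerm (z w : ℂ) (t : ℝ) :
    HasSum (fun n ↦ gaussSinhTerm z w n t) ((t : ℂ) ^ z * rexp (-t ^ 2) * sinh (w * t)) :=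
  (hasSum_sinh (w * t)).mul_left _

theorem gaussSinhTerm_eq (z w : ℂ) (n : ℕ) {t : ℝ} (ht : 0 < t) :
    gaussSinhTerm z w n t =
      w ^ (2 * n + 1) / (2 * n + 1)! * ((t : ℂ) ^ (z + (2 * n + 1 : ℕ)) * rexp (-t ^ 2)) := by
  rw [gaussSinhTerm, cpow_add _ _ (ofReal_ne_zero.mpr ht.ne'), cpow_natCast]
  ring

theorem neg_one_lt_re_add_two_mul_add_one {z : ℂ} (hz : -2 < z.re) (n : ℕ) :
    -1 < (z + (2 * n + 1 : ℕ)).re := by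
  rw [add_re, natCast_re]
  push_cast
  linarith [(n.cast_nonneg : (0 : ℝ) ≤ n)]

theorem integrableOn_gaussSinhTerm {z : ℂ} (hz : -2 < z.re) (w : ℂ) (n : ℕ) :
    IntegrableOn (gaussSinhTerm z w n) (Ioi 0) := by
  have hmoment :=
    integrableOn_cpow_mul_exp_neg_mul_sq (neg_one_lt_re_add_two_mul_add_one hz n) one_pos
  simp only [one_mul] at hmoment
  exact IntegrableOn.congr_fun (hmoment.const_mul _)
    (fun _ ht ↦ (gaussSinhTerm_eq z w n ht).symm) measurableSet_Ioi

theorem integral_gaussSinhTerm {z : ℂ} (hz : -2 < z.re) (w : ℂ) (n : ℕ) :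
    ∫ t in Ioi (0 : ℝ), gaussSinhTerm z w n t =
      1 / 2 * w * Gamma (1 + z / 2) *
        (poch (1 + z / 2) n / poch (3 / 2) n * (w ^ 2 / 4) ^ n / n !) := by
  have hs : 0 < (1 + z / 2).re := by
    simp only [add_re, one_re, div_ofNat_re]
    linarith
  have hmoment :=
    integral_cpow_mul_exp_neg_mul_sq (neg_one_lt_re_add_two_mul_add_one hz n) one_pos
  simp only [one_mul, ofReal_one, div_one, one_cpow] at hmoment
  rw [setIntegral_congr_fun measurableSet_Ioi fun _ ht ↦ gaussSinhTerm_eq z w n ht,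
    integral_const_mul, hmoment,
    show (z + (2 * n + 1 : ℕ) + 1) / 2 = 1 + z / 2 + n by push_cast; ring,
    ← Gamma_mul_poch (ne_neg_natCast_of_re_pos hs), factorial_two_mul_add_one_eq]
  have hpoch :=
    poch_ne_zero (ne_neg_natCast_of_re_pos (by norm_num : (0 : ℝ) < (3 / 2 : ℂ).re)) n
  rw [div_pow]
  field_simp
  ring

theorem integral_norm_gaussSinhTerm (z w : ℂ) (n : ℕ) :
    ∫ t in Ioi (0 : ℝ), ‖gaussSinhTerm z w n t‖ =
      ‖∫ t in Ioi (0 : ℝ), gaussSinhTerm z.re ‖w‖ n t‖ := by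
  have hnorm :
      ∀ t ∈ Ioi (0 : ℝ), gaussSinhTerm z.re ‖w‖ n t = ‖gaussSinhTerm z w n t‖ := by
    intro t (ht : 0 < t)
    rw [gaussSinhTerm, gaussSinhTerm, norm_mul, norm_mul, norm_cpow_eq_rpow_re_of_pos ht,
      norm_real, norm_of_nonneg (exp_pos _).le, norm_div, norm_pow, norm_mul, norm_real,
      norm_of_nonneg ht.le, Complex.norm_natCast]
    push_cast
    rw [ofReal_cpow ht.le]
  rw [setIntegral_congr_fun measurableSet_Ioi hnorm, integral_complex_ofReal, norm_real,
    norm_of_nonneg (setIntegral_nonneg measurableSet_Ioi fun _ _ ↦ norm_nonneg _)]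

theorem summable_integral_norm_gaussSinhTerm {z : ℂ} (hz : -2 < z.re) (w : ℂ) :
    Summable fun n ↦ ∫ t in Ioi (0 : ℝ), ‖gaussSinhTerm z w n t‖ := by
  have hz' : -2 < (z.re : ℂ).re := by simpa using hz
  simp_rw [integral_norm_gaussSinhTerm, integral_gaussSinhTerm hz']
  exact ((summable_hyp1F1_series _ (ne_neg_natCast_of_re_pos (by norm_num)) _).mul_left _).norm

theorem integral_cpow_mul_exp_neg_sq_mul_sinh {z : ℂ} (hz : -2 < z.re) (w : ℂ) :
    ∫ t in Ioi (0 : ℝ), (t : ℂ) ^ z * rexp (-t ^ 2) * sinh (w * t) =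
      1 / 2 * w * Gamma (1 + z / 2) * hyp1F1 (1 + z / 2) (3 / 2) (w ^ 2 / 4) := by
  simp_rw [← (hasSum_gaussSinhTerm z w _).tsum_eq]
  rw [← integral_tsum_of_summable_integral_norm (integrableOn_gaussSinhTerm hz w)
    (summable_integral_norm_gaussSinhTerm hz w)]
  simp_rw [integral_gaussSinhTerm hz]
  exact tsum_mul_left

theorem integral_cpow_mul_comp_mul_Ioi (z : ℂ) (g : ℝ → ℂ) {v : ℝ} (hv : 0 < v) :
    ∫ u in Ioi (0 : ℝ), (u : ℂ) ^ z * g (u * v) =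
      (v : ℂ) ^ (-1 - z) * ∫ t in Ioi (0 : ℝ), (t : ℂ) ^ z * g t := by
  have hv' : (v : ℂ) ≠ 0 := ofReal_ne_zero.mpr hv.ne'
  have hscale : ∀ u ∈ Ioi (0 : ℝ), (u : ℂ) ^ z * g (u * v) =
      (v : ℂ) ^ (-z) * (((v * u : ℝ) : ℂ) ^ z * g (v * u)) := by
    intro u (hu : 0 < u)
    have hvz : (v : ℂ) ^ z ≠ 0 := cpow_ne_zero_iff.mpr (Or.inl hv')
    rw [ofReal_mul, mul_cpow_ofReal_nonneg hv.le hu.le, cpow_neg, mul_comm u]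
    field_simp
  rw [setIntegral_congr_fun measurableSet_Ioi hscale, integral_const_mul,
    integral_comp_mul_left_Ioi (fun t ↦ (t : ℂ) ^ z * g t) 0 hv, mul_zero, real_smul,
    ← mul_assoc, sub_eq_add_neg, cpow_add _ _ hv', cpow_neg_one, ofReal_inv,
    mul_comm ((v : ℂ)⁻¹)]

/-- For `Re(z) > −2`, complex `w`, and real `v > 0`,
`∫₀^∞ u^z e^{−u²v²} sinh(wuv) du = (1/2) w v^{−1−z} Γ(1+z/2) ₁F₁(1+z/2;3/2;w²/4)`. -/
theorem integral_power_sinh (z w : ℂ) (hz : -2 < z.re) (v : ℝ) (hv : 0 < v) :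
    ∫ u in Ioi (0:ℝ), (u:ℂ)^z * (Real.exp (-u^2*v^2) : ℂ) * Complex.sinh (w * u * v)
      = (1/2) * w * (v:ℂ)^(-1-z : ℂ) * Complex.Gamma (1 + z/2) *
        hyp1F1 (1 + z/2) (3/2) (w^2/4) := by
  have hscaled :=
    integral_cpow_mul_comp_mul_Ioi z (fun t ↦ (rexp (-t ^ 2) : ℂ) * sinh (w * t)) hv
  simp only [ofReal_mul, mul_pow, neg_mul, ← mul_assoc] at hscaled ⊢
  rw [hscaled, integral_cpow_mul_exp_neg_sq_mul_sinh hz]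
  ring
end

section
/- For 0 < Re(s) < 2 one has ∫₁^∞ dt / (t (t² − 1)^{s/2}) = (1/2) Γ(s/2) Γ(1 − s/2). -/
/-!
Substituting `t = x ^ (-1/2)` maps `(0, 1)` onto `(1, ∞)` and turns the integrand into
`(1/2) x ^ (s/2 - 1) (1 - x) ^ (-s/2)`, since `t² - 1 = (1 - x) / x`. The integral is therefore
half the Beta integral `B(s/2, 1 - s/2) = Γ(s/2) Γ(1 - s/2) / Γ(1)`.
-/

open Real MeasureTheory Set

theorem image_rpow_Ioo_zero_one_of_neg {p : ℝ} (hp : p < 0) :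
    (fun x : ℝ => x ^ p) '' Ioo 0 1 = Ioi 1 := by
  ext t
  constructor
  · rintro ⟨x, ⟨hx0, hx1⟩, rfl⟩
    exact one_lt_rpow_of_pos_of_lt_one_of_neg hx0 hx1 hp
  · intro ht
    have ht0 : 0 < t := zero_lt_one.trans ht
    exact ⟨t ^ p⁻¹, ⟨rpow_pos_of_pos ht0 _, rpow_lt_one_of_one_lt_of_neg ht (inv_lt_zero.2 hp)⟩,
      rpow_inv_rpow ht0.le hp.ne⟩

theorem integral_Ioo_zero_one_comp_rpow_of_neg {E : Type*} [NormedAddCommGroup E]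
    [NormedSpace ℝ E] (f : ℝ → E) {p : ℝ} (hp : p < 0) :
    ∫ x in Ioo 0 1, (|p| * x ^ (p - 1)) • f (x ^ p) = ∫ t in Ioi 1, f t := by
  have hderiv : ∀ x ∈ Ioo (0 : ℝ) 1,
      HasDerivWithinAt (fun x : ℝ => x ^ p) (p * x ^ (p - 1)) (Ioo 0 1) x :=
    fun x hx => (hasDerivAt_rpow_const (Or.inl hx.1.ne')).hasDerivWithinAt
  have hinj : InjOn (fun x : ℝ => x ^ p) (Ioo 0 1) :=
    (strictAntiOn_rpow_Ioi_of_exponent_neg hp).injOn.mono Ioo_subset_Ioi_self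
  rw [← image_rpow_Ioo_zero_one_of_neg hp,
    integral_image_eq_integral_abs_deriv_smul measurableSet_Ioo hderiv hinj]
  refine setIntegral_congr_fun measurableSet_Ioo fun x hx => ?_
  rw [abs_mul, abs_of_pos (rpow_pos_of_pos hx.1 _)]

theorem rpow_neg_half_sq_sub_one {x : ℝ} (hx : 0 < x) :
    (x ^ (-(1 / 2) : ℝ)) ^ 2 - 1 = (1 - x) / x := by
  rw [← rpow_natCast, ← rpow_mul hx.le]
  norm_num [rpow_neg_one]
  field_simp

theorem rpow_neg_half_substitution_eq_beta_integrand (u : ℂ) {x : ℝ} (hx : x ∈ Ioo (0 : ℝ) 1) :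
    (|(-(1 / 2) : ℝ)| * x ^ ((-(1 / 2) : ℝ) - 1)) •
        (1 / (((x ^ (-(1 / 2) : ℝ) : ℝ) : ℂ) * (((x ^ (-(1 / 2) : ℝ)) ^ 2 - 1 : ℝ) : ℂ) ^ u))
      = 1 / 2 * ((x : ℂ) ^ (u - 1) * (1 - (x : ℂ)) ^ (1 - u - 1)) := by
  obtain ⟨hx0, hx1⟩ := hx
  have hx0' : (x : ℂ) ≠ 0 := Complex.ofReal_ne_zero.2 hx0.ne'
  have hx1' : (1 - x : ℂ) ≠ 0 := by exact_mod_cast (sub_pos.2 hx1).ne'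
  have hpow : (x : ℂ) ^ (-(1 / 2) - 1 : ℂ) * (x : ℂ) ^ u
      = (x : ℂ) ^ (-(1 / 2) : ℂ) * (x : ℂ) ^ (u - 1) := by
    rw [← Complex.cpow_add _ _ hx0', ← Complex.cpow_add _ _ hx0']
    ring_nf
  have hb : (x : ℂ) ^ (-(1 / 2) : ℂ) ≠ 0 := by simp [Complex.cpow_eq_zero_iff, hx0']
  have hd : (x : ℂ) ^ u ≠ 0 := by simp [Complex.cpow_eq_zero_iff, hx0']
  have he : (1 - (x : ℂ)) ^ u ≠ 0 := by simp [Complex.cpow_eq_zero_iff, hx1']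
  rw [rpow_neg_half_sq_sub_one hx0, Complex.ofReal_div,
    Complex.div_cpow_ofReal_nonneg (sub_pos.2 hx1).le hx0.le, Complex.real_smul,
    Complex.ofReal_mul, Complex.ofReal_cpow hx0.le, Complex.ofReal_cpow hx0.le,
    show (1 - u - 1 : ℂ) = -u by ring, Complex.cpow_neg, abs_neg,
    abs_of_pos (by norm_num : (0 : ℝ) < 1 / 2)]
  push_cast
  generalize (x : ℂ) ^ (-(1 / 2) - 1 : ℂ) = a, (x : ℂ) ^ (-(1 / 2) : ℂ) = b,
    (x : ℂ) ^ (u - 1) = c, (x : ℂ) ^ u = d, (1 - (x : ℂ)) ^ u = e at *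
  field_simp
  linear_combination hpow

theorem integral_Ioi_one_div_mul_sq_sub_one_cpow (u : ℂ) :
    ∫ t in Ioi (1 : ℝ), 1 / ((t : ℂ) * ((t ^ 2 - 1 : ℝ) : ℂ) ^ u)
      = 1 / 2 * Complex.betaIntegral u (1 - u) := by
  rw [← integral_Ioo_zero_one_comp_rpow_of_neg _ (by norm_num : (-(1 / 2) : ℝ) < 0),
    setIntegral_congr_fun measurableSet_Ioo
      fun x hx => rpow_neg_half_substitution_eq_beta_integrand u hx,
    integral_const_mul, Complex.betaIntegral, intervalIntegral.integral_of_le zero_le_one,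
    integral_Ioc_eq_integral_Ioo]

/-- For `0 < Re(s) < 2`, `∫₁^∞ dt/(t (t² − 1)^{s/2}) = (1/2) Γ(s/2) Γ(1 − s/2)`. -/
theorem integral_beta_type (s : ℂ) (h1 : 0 < s.re) (h2 : s.re < 2) :
    ∫ t in Ioi (1:ℝ), 1 / ((t:ℂ) * ((t^2 - 1 : ℝ) : ℂ) ^ (s/2))
      = (1/2) * Complex.Gamma (s/2) * Complex.Gamma (1 - s/2) := by
  have hs : 0 < (s / 2).re := by rw [Complex.div_ofNat_re]; linarith
  have hs' : 0 < (1 - s / 2).re := by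
    rw [Complex.sub_re, Complex.one_re, Complex.div_ofNat_re]; linarith
  rw [integral_Ioi_one_div_mul_sq_sub_one_cpow, mul_assoc,
    Complex.Gamma_mul_Gamma_eq_betaIntegral hs hs', add_sub_cancel, Complex.Gamma_one, one_mul]
end

section
/- For Re(β) > 0 and Re(γ) > 0, ∫₀^∞ y^{ν−1} e^{−β/y − γy} dy = 2 (β/γ)^{ν/2} K_ν(2√(βγ)), where K_ν is the modified Bessel function of the second kind. -/
open Real MeasureTheory Set

/-- Modified Bessel function of the second kind (via the cosh integral representation,
valid for `Re(x) > 0` and all complex orders `ν`). -/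
noncomputable def besselK (ν x : ℂ) : ℂ :=
  ∫ t in Ioi (0:ℝ), Complex.exp (-x * Real.cosh t) * Complex.cosh (ν * t)

/-!
Substituting `y = eˣ` turns the left side into `∫_ℝ exp (ν x - β e⁻ˣ - γ eˣ) dx`. For `β = γ = p`
folding `x ↦ -x` gives `2 K_ν(2p)` straight from the cosh representation, and translating `x` by
a real `L` replaces `(β, γ)` by `(β e⁻ᴸ, γ eᴸ)`; together these give the formula whenever `β / γ`
is a positive real. Both sides are holomorphic in `β` on the right half-plane (differentiation
under the integral sign of a Laplace-type integral), so the identity theorem extends the formula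
from the ray `γ · (0, ∞)` to all `β`.
-/

open Complex Filter Topology

namespace Complex

theorem norm_cosh_le_exp_norm (z : ℂ) : ‖cosh z‖ ≤ rexp ‖z‖ := by
  have hsum := norm_add_le (cexp z) (cexp (-z))
  have h₁ := norm_exp_le_exp_norm z
  have h₂ := norm_exp_le_exp_norm (-z)
  rw [norm_neg] at h₂
  rw [Complex.cosh, norm_div, Complex.norm_two]
  linarith

theorem mul_mem_slitPlane_of_re_pos {a b : ℂ} (ha : 0 < a.re) (hb : 0 < b.re) :
    a * b ∈ slitPlane := by
  have ha0 : a ≠ 0 := fun h => by simp [h] at ha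
  have hb0 : b ≠ 0 := fun h => by simp [h] at hb
  obtain ⟨ha₁, ha₂⟩ := abs_lt.1 (abs_arg_lt_pi_div_two_iff.2 (.inl ha))
  obtain ⟨hb₁, hb₂⟩ := abs_lt.1 (abs_arg_lt_pi_div_two_iff.2 (.inl hb))
  rw [mem_slitPlane_iff_arg, arg_mul ha0 hb0 ⟨by linarith, by linarith⟩]
  exact ⟨by linarith, mul_ne_zero ha0 hb0⟩

theorem div_mem_slitPlane_of_re_pos {a b : ℂ} (ha : 0 < a.re) (hb : 0 < b.re) :
    a / b ∈ slitPlane := by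
  have hb0 : b ≠ 0 := fun h => by simp [h] at hb
  rw [div_eq_mul_inv]
  exact mul_mem_slitPlane_of_re_pos ha (by rw [inv_re]; exact div_pos hb (normSq_pos.2 hb0))

theorem re_cpow_one_half_pos {z : ℂ} (hz : z ∈ slitPlane) : 0 < (z ^ ((1:ℂ)/2)).re := by
  rw [cpow_def_of_ne_zero (slitPlane_ne_zero hz), exp_re]
  refine mul_pos (Real.exp_pos _) (Real.cos_pos_of_mem_Ioo ?_)
  have him : (log z * (1/2)).im = z.arg / 2 := by simp [log_im]; ring
  have h₁ := neg_pi_lt_arg z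
  have h₂ := lt_of_le_of_ne (arg_le_pi z) (slitPlane_arg_ne_pi hz)
  rw [him]
  constructor <;> linarith

end Complex

theorem integrable_exp_mul_abs_sub_mul_exp (c : ℝ) {u v : ℝ} (hu : 0 < u) (hv : 0 < v) :
    Integrable fun x : ℝ => rexp (c * |x| - u * rexp (-x) - v * rexp x) := by
  set m := min u v
  have hm : 0 < m := lt_min hu hv
  refine ((integrable_exp_neg_mul_sq (b := m / 4) (by positivity)).const_mul
    (rexp (c ^ 2 / m))).mono' (by fun_prop) (ae_of_all _ fun x => ?_)
  rw [Real.norm_of_nonneg (Real.exp_pos _).le, ← Real.exp_add]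
  refine Real.exp_le_exp.2 ?_
  have hsq : x ^ 2 / 2 ≤ rexp x + rexp (-x) := by
    nlinarith [quadratic_le_exp_of_nonneg (abs_nonneg x), Real.exp_abs_le x, sq_abs x,
      abs_nonneg x]
  have hexp : m * (rexp x + rexp (-x)) ≤ u * rexp (-x) + v * rexp x := by
    nlinarith [min_le_left u v, min_le_right u v, Real.exp_pos x, Real.exp_pos (-x)]
  have hamgm : c * |x| ≤ c ^ 2 / m + m * x ^ 2 / 4 := by
    rw [div_add' _ _ _ hm.ne', le_div_iff₀ hm, ← sq_abs x]
    nlinarith [sq_nonneg (c - m * |x| / 2)]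
  nlinarith

theorem differentiableAt_integral_cexp_neg_mul {α : Type*} [MeasurableSpace α] {μ : Measure α}
    {w : α → ℝ} {h : α → ℂ} (hw₀ : ∀ᵐ x ∂μ, 0 ≤ w x) (hw : AEStronglyMeasurable w μ)
    (hh : AEStronglyMeasurable h μ)
    (hint : ∀ δ > 0, Integrable (fun x => rexp (-δ * w x) * ‖h x‖) μ) {z₀ : ℂ}
    (hz₀ : 0 < z₀.re) :
    DifferentiableAt ℂ (fun z => ∫ x, cexp (-z * w x) * h x ∂μ) z₀ := by
  set a := z₀.re
  have hmeas : ∀ z : ℂ, AEStronglyMeasurable (fun x => cexp (-z * w x) * h x) μ := by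
    fun_prop
  have hnorm : ∀ z x, ‖cexp (-z * w x) * h x‖ = rexp (-z.re * w x) * ‖h x‖ := by
    intro z x
    rw [norm_mul, Complex.norm_exp]
    simp
  refine (hasDerivAt_integral_of_dominated_loc_of_deriv_le
    (F' := fun z x => cexp (-z * w x) * h x * -(w x : ℂ))
    (bound := fun x => 4 / a * (rexp (-(a / 4) * w x) * ‖h x‖))
    ((isOpen_lt continuous_const Complex.continuous_re).mem_nhds (half_lt_self hz₀))
    (Eventually.of_forall hmeas) ?_ ?_ ?_ ((hint _ (by positivity)).const_mul _) ?_
    ).2.differentiableAt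
  · exact (integrable_norm_iff (hmeas z₀)).1
      ((hint a hz₀).congr (ae_of_all _ fun x => (hnorm z₀ x).symm))
  · fun_prop
  · filter_upwards [hw₀] with x hx z hz
    -- the factor `w` brought down by differentiation costs half of the exponential decay
    have hlin : w x ≤ 4 / a * rexp (a / 4 * w x) := by
      rw [div_mul_eq_mul_div, le_div_iff₀' hz₀]
      nlinarith [Real.add_one_le_exp (a / 4 * w x)]
    calc ‖cexp (-z * w x) * h x * -(w x : ℂ)‖ = w x * rexp (-z.re * w x) * ‖h x‖ := by
          rw [norm_mul, hnorm, norm_neg, Complex.norm_real, Real.norm_of_nonneg hx]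
          ring
      _ ≤ 4 / a * rexp (a / 4 * w x) * rexp (-(a / 2) * w x) * ‖h x‖ := by
          gcongr
      _ = 4 / a * (rexp (-(a / 4) * w x) * ‖h x‖) := by
          rw [mul_assoc (4 / a), ← Real.exp_add]
          ring_nf
  · exact ae_of_all _ fun x z _ =>
      (((hasDerivAt_neg z).mul_const (w x : ℂ)).cexp.mul_const (h x)).congr_deriv (by ring)

theorem integrable_exp_neg_mul_cosh_mul_norm_cosh (ν : ℂ) {δ : ℝ} (hδ : 0 < δ) :
    Integrable fun t : ℝ => rexp (-δ * Real.cosh t) * ‖Complex.cosh (ν * t)‖ := by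
  refine (integrable_exp_mul_abs_sub_mul_exp ‖ν‖ (half_pos hδ) (half_pos hδ)).mono'
    (by fun_prop) (ae_of_all _ fun t => ?_)
  have hcosh : ‖Complex.cosh (ν * t)‖ ≤ rexp (‖ν‖ * |t|) := by
    simpa [norm_mul] using Complex.norm_cosh_le_exp_norm (ν * t)
  rw [Real.norm_of_nonneg (by positivity)]
  calc rexp (-δ * Real.cosh t) * ‖Complex.cosh (ν * t)‖
      ≤ rexp (-δ * Real.cosh t) * rexp (‖ν‖ * |t|) := by gcongr
    _ = rexp (‖ν‖ * |t| - δ / 2 * rexp (-t) - δ / 2 * rexp t) := by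
      rw [← Real.exp_add, Real.cosh_eq]
      ring_nf

theorem differentiableAt_besselK (ν : ℂ) {x : ℂ} (hx : 0 < x.re) :
    DifferentiableAt ℂ (besselK ν) x :=
  differentiableAt_integral_cexp_neg_mul (ae_of_all _ fun t => (Real.cosh_pos t).le)
    (by fun_prop) (by fun_prop)
    (fun _ hδ => (integrable_exp_neg_mul_cosh_mul_norm_cosh ν hδ).integrableOn) hx

theorem differentiableAt_two_mul_cpow_div_mul_besselK (ν : ℂ) {β γ : ℂ} (hβ : 0 < β.re)
    (hγ : 0 < γ.re) :
    DifferentiableAt ℂ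
      (fun β => 2 * (β/γ)^(ν/2 : ℂ) * besselK ν (2 * (β*γ)^((1:ℂ)/2))) β := by
  have hprod := Complex.mul_mem_slitPlane_of_re_pos hβ hγ
  have hK : DifferentiableAt ℂ (besselK ν) (2 * (β*γ)^((1:ℂ)/2)) :=
    differentiableAt_besselK ν (by simpa using Complex.re_cpow_one_half_pos hprod)
  have hsqrt : DifferentiableAt ℂ (fun β => 2 * (β*γ)^((1:ℂ)/2)) β :=
    ((differentiableAt_id.mul_const γ).cpow (differentiableAt_const _) hprod).const_mul 2
  have hKsqrt := hK.comp β hsqrt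
  exact ((differentiableAt_const 2).mul ((differentiableAt_id.div_const γ).cpow
    (differentiableAt_const _) (Complex.div_mem_slitPlane_of_re_pos hβ hγ))).mul hKsqrt

noncomputable def bilateralBesselK (ν β γ : ℂ) : ℂ :=
  ∫ x : ℝ, cexp (ν * x - β * rexp (-x) - γ * rexp x)

theorem integral_Ioi_cpow_mul_cexp_eq_bilateralBesselK (ν β γ : ℂ) :
    ∫ y in Ioi (0:ℝ), (y:ℂ)^(ν-1) * cexp (-β/(y:ℂ) - γ*(y:ℂ)) = bilateralBesselK ν β γ := by
  have h := integral_image_eq_integral_abs_deriv_smul MeasurableSet.univ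
    (fun x _ => (Real.hasDerivAt_exp x).hasDerivWithinAt) Real.exp_injective.injOn
    (fun y : ℝ => (y:ℂ)^(ν-1) * cexp (-β/(y:ℂ) - γ*(y:ℂ)))
  rw [image_univ, Real.range_exp, Measure.restrict_univ] at h
  rw [h, bilateralBesselK]
  congr 1 with x
  rw [abs_of_pos (Real.exp_pos x), Complex.real_smul,
    Complex.cpow_def_of_ne_zero (by exact_mod_cast (Real.exp_pos x).ne'),
    ← Complex.ofReal_log (Real.exp_pos x).le, Real.log_exp, Real.exp_neg]
  push_cast
  rw [← Complex.exp_add, ← Complex.exp_add]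
  ring_nf

theorem integrable_bilateralBesselK_integrand (ν : ℂ) {β γ : ℂ} (hβ : 0 < β.re)
    (hγ : 0 < γ.re) : Integrable fun x : ℝ => cexp (ν * x - β * rexp (-x) - γ * rexp x) := by
  refine (integrable_exp_mul_abs_sub_mul_exp |ν.re| hβ hγ).mono' (by fun_prop)
    (ae_of_all _ fun x => ?_)
  rw [Complex.norm_exp, ← abs_mul]
  simp only [sub_re, mul_re, ofReal_re, ofReal_im, mul_zero, sub_zero]
  gcongr
  exact le_abs_self _

theorem bilateralBesselK_translate (ν β γ : ℂ) (L : ℝ) :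
    bilateralBesselK ν β γ = cexp (ν * L) * bilateralBesselK ν (β * rexp (-L)) (γ * rexp L) := by
  rw [bilateralBesselK, bilateralBesselK, ← integral_add_right_eq_self _ L,
    ← integral_const_mul]
  congr 1 with x
  rw [← Complex.exp_add, neg_add, Real.exp_add, Real.exp_add]
  push_cast
  ring_nf

theorem bilateralBesselK_self (ν : ℂ) {p : ℂ} (hp : 0 < p.re) :
    bilateralBesselK ν p p = 2 * besselK ν (2 * p) := by
  have hint := integrable_bilateralBesselK_integrand ν hp hp
  rw [bilateralBesselK, ← intervalIntegral.integral_Iic_add_Ioi hint.integrableOn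
    hint.integrableOn, ← integral_comp_neg_Ioi, neg_zero,
    ← integral_add hint.comp_neg.integrableOn hint.integrableOn, besselK, ← integral_const_mul]
  refine setIntegral_congr_fun measurableSet_Ioi fun t _ => ?_
  simp only [Real.cosh_eq, Complex.cosh, neg_neg]
  push_cast
  simp only [add_div, mul_add, mul_div_assoc', ← Complex.exp_add]
  ring_nf

theorem differentiableAt_bilateralBesselK_left (ν : ℂ) {β γ : ℂ} (hβ : 0 < β.re)
    (hγ : 0 < γ.re) : DifferentiableAt ℂ (fun β => bilateralBesselK ν β γ) β := by
  have hsplit : (fun β => bilateralBesselK ν β γ) = fun β =>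
      ∫ x : ℝ, cexp (-β * rexp (-x)) * cexp (ν * x - γ * rexp x) := by
    ext β
    refine integral_congr_ae (ae_of_all _ fun x => ?_)
    simp only [← Complex.exp_add]
    ring_nf
  rw [hsplit]
  refine differentiableAt_integral_cexp_neg_mul (ae_of_all _ fun x => (Real.exp_pos _).le)
    (by fun_prop) (by fun_prop) (fun δ hδ => ?_) hβ
  refine ((integrable_bilateralBesselK_integrand ν (β := δ) (by simpa using hδ) hγ).norm).congr
    (ae_of_all _ fun x => ?_)
  simp only [Complex.norm_exp, ← Real.exp_add]
  simp [-Complex.ofReal_exp]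
  ring_nf

theorem bilateralBesselK_mul_ofReal_sq_self (ν : ℂ) {γ : ℂ} (hγ : 0 < γ.re) {t : ℝ}
    (ht : 0 < t) :
    bilateralBesselK ν (γ * (t ^ 2 : ℝ)) γ
      = 2 * ((γ * (t ^ 2 : ℝ)) / γ) ^ (ν / 2 : ℂ)
          * besselK ν (2 * ((γ * (t ^ 2 : ℝ)) * γ) ^ ((1 : ℂ) / 2)) := by
  have hγ0 : γ ≠ 0 := fun h => by simp [h] at hγ
  have hγt : 0 < (γ * t).re := by simpa using mul_pos hγ ht
  have hpow : (((t ^ 2 : ℝ) : ℂ)) ^ (ν / 2 : ℂ) = cexp (ν * Real.log t) := by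
    rw [Complex.cpow_def_of_ne_zero (by exact_mod_cast (pow_pos ht 2).ne'),
      ← Complex.ofReal_log (pow_pos ht 2).le, Real.log_pow]
    push_cast
    ring_nf
  have hsqrt : ((γ * (t ^ 2 : ℝ)) * γ) ^ ((1 : ℂ) / 2) = γ * t := by
    rw [one_div, show (γ * (t ^ 2 : ℝ)) * γ = (γ * t) ^ 2 by push_cast; ring]
    exact Complex.sq_cpow_two_inv hγt
  rw [bilateralBesselK_translate ν _ γ (Real.log t), Real.exp_neg, Real.exp_log ht,
    show γ * ((t ^ 2 : ℝ) : ℂ) * ((t⁻¹ : ℝ) : ℂ) = γ * t by push_cast; field_simp,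
    bilateralBesselK_self ν hγt, mul_div_cancel_left₀ _ hγ0, hpow, hsqrt]
  ring

theorem eqOn_re_pos_of_eq_on_ray {f g : ℂ → ℂ} (hf : DifferentiableOn ℂ f {z | 0 < z.re})
    (hg : DifferentiableOn ℂ g {z | 0 < z.re}) {γ : ℂ} (hγ : 0 < γ.re)
    (h : ∀ s : ℝ, 0 < s → f (γ * s) = g (γ * s)) : EqOn f g {z | 0 < z.re} := by
  have hU : IsOpen {z : ℂ | 0 < z.re} := isOpen_lt continuous_const Complex.continuous_re
  have hγ0 : γ ≠ 0 := fun h => by simp [h] at hγ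
  have hray : Tendsto (fun s : ℝ => γ * s) (𝓝[≠] 1) (𝓝[≠] γ) := by
    refine tendsto_nhdsWithin_of_tendsto_nhds_of_eventually_within _ ?_ ?_
    · have hcont : Continuous fun s : ℝ => γ * s := by fun_prop
      exact (hcont.tendsto' 1 γ (by simp)).mono_left nhdsWithin_le_nhds
    · filter_upwards [self_mem_nhdsWithin] with s hs
      simpa [hγ0] using hs
  exact (hf.analyticOnNhd hU).eqOn_of_preconnected_of_frequently_eq (hg.analyticOnNhd hU)
    (convex_halfSpace_re_gt 0).isPreconnected hγ (hray.frequently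
      ((eventually_nhdsWithin_of_eventually_nhds (lt_mem_nhds one_pos)).mono h).frequently)

/-- For `Re(β) > 0`, `Re(γ) > 0`,
`∫₀^∞ y^{ν−1} e^{−β/y − γy} dy = 2 (β/γ)^{ν/2} K_ν(2√(βγ))`. -/
theorem besselK_mellin_type (ν β γ : ℂ) (hβ : 0 < β.re) (hγ : 0 < γ.re) :
    ∫ y in Ioi (0:ℝ), (y:ℂ)^(ν-1) * Complex.exp (-β/(y:ℂ) - γ*(y:ℂ))
      = 2 * (β/γ)^(ν/2 : ℂ) * besselK ν (2 * (β*γ)^((1:ℂ)/2)) := by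
  rw [integral_Ioi_cpow_mul_cexp_eq_bilateralBesselK]
  refine eqOn_re_pos_of_eq_on_ray
    (fun β hβ => (differentiableAt_bilateralBesselK_left ν hβ hγ).differentiableWithinAt)
    (fun β hβ => (differentiableAt_two_mul_cpow_div_mul_besselK ν hβ hγ).differentiableWithinAt)
    hγ (fun s hs => ?_) hβ
  rw [← Real.sq_sqrt hs.le]
  exact bilateralBesselK_mul_ofReal_sq_self ν hγ (Real.sqrt_pos.2 hs)
end

section
/- For 1 < Re(s) < 2 and real a > 0 (extendable to Re(a) > 0, Re(s) > −1, s ≠ 1), Hermite-type formula: ζ(s, a+1) = −a^{−s}/2 + a^{1−s}/(s−1) + (1/Γ(s)) ∫₀^∞ e^{−ax} (1/(e^x − 1) − 1/x + 1/2) x^{s−1} dx. -/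
/-!
Expand `e^{-ax}/(e^x - 1) = ∑_{n ≥ 0} e^{-(n+a+1)x}` and integrate termwise against `x^{s-1}`:
the Mellin transform of `e^{-ax}/(e^x - 1)` is `Γ(s) ζ(s, a+1)` for `Re s > 1`. In this range the
Mellin transforms of the two correction terms converge separately, and they are Gamma integrals:
that of `e^{-ax}/x` is `a^{1-s} Γ(s-1) = a^{1-s} Γ(s)/(s-1)` and that of `e^{-ax}` is `a^{-s} Γ(s)`.
-/

open Real MeasureTheory Set

/-- The Hurwitz zeta function `ζ(s,a) = ∑_{n≥0} (n+a)^{−s}` (series valid for `Re(s) > 1`). -/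
noncomputable def hzeta (s a : ℂ) : ℂ := ∑' n : ℕ, ((n:ℂ) + a) ^ (-s)

section MellinExp

variable {a : ℝ} {s : ℂ}

theorem hasMellin_exp_neg_mul (ha : 0 < a) (hs : 0 < s.re) :
    HasMellin (fun t ↦ ((rexp (-a * t) : ℝ) : ℂ)) s ((a : ℂ) ^ (-s) * Complex.Gamma s) := by
  have hexp : MellinConvergent (fun t ↦ ((rexp (-t) : ℝ) : ℂ)) s := by
    simpa only [MellinConvergent, smul_eq_mul, mul_comm] using Complex.GammaIntegral_convergent hs
  simp_rw [neg_mul a]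
  refine ⟨(MellinConvergent.comp_mul_left ha).mpr hexp, ?_⟩
  rw [mellin_comp_mul_left (fun u ↦ ((rexp (-u) : ℝ) : ℂ)) s ha, ← Complex.GammaIntegral_eq_mellin,
    ← Complex.Gamma_eq_integral hs, smul_eq_mul]

theorem hasMellin_exp_neg_mul_div_self (ha : 0 < a) (hs : 1 < s.re) :
    HasMellin (fun t ↦ ((rexp (-a * t) / t : ℝ) : ℂ)) s
      ((a : ℂ) ^ (1 - s) * Complex.Gamma (s - 1)) := by
  have hE := hasMellin_exp_neg_mul ha (s := s - 1) (by simp; linarith)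
  have hcpow : (fun t ↦ ((rexp (-a * t) / t : ℝ) : ℂ))
      = fun t : ℝ ↦ (t : ℂ) ^ (-1 : ℂ) • ((rexp (-a * t) : ℝ) : ℂ) := by
    ext t
    rw [Complex.cpow_neg_one, smul_eq_mul, Complex.ofReal_div, div_eq_inv_mul]
  rw [hcpow]
  refine ⟨MellinConvergent.cpow_smul.mpr (sub_eq_add_neg s 1 ▸ hE.1), ?_⟩
  rw [mellin_cpow_smul, ← sub_eq_add_neg, hE.2, neg_sub]

theorem hasSum_exp_neg_mul_div_exp_sub_one (a : ℝ) {t : ℝ} (ht : 0 < t) :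
    HasSum (fun n : ℕ ↦ rexp (-(n + (a + 1)) * t)) (rexp (-a * t) / (rexp t - 1)) := by
  have hgeo := (hasSum_geometric_of_lt_one (exp_nonneg (-t))
    (exp_lt_one_iff.mpr (neg_neg_of_pos ht))).mul_right (rexp (-(a + 1) * t))
  have hterm (n : ℕ) : rexp (-t) ^ n * rexp (-(a + 1) * t) = rexp (-(n + (a + 1)) * t) := by
    rw [← Real.exp_nat_mul, ← Real.exp_add]
    ring_nf
  have hval : (1 - rexp (-t))⁻¹ * rexp (-(a + 1) * t) = rexp (-a * t) / (rexp t - 1) := by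
    have : rexp t - 1 ≠ 0 := (sub_pos.mpr (one_lt_exp_iff.mpr ht)).ne'
    rw [show -(a + 1) * t = -a * t + -t by ring, Real.exp_add, Real.exp_neg t]
    field_simp
  simpa only [hterm, hval] using hgeo

theorem mellin_exp_neg_mul_div_exp_sub_one (ha : -1 < a) (hs : 1 < s.re) :
    mellin (fun t ↦ ((rexp (-a * t) / (rexp t - 1) : ℝ) : ℂ)) s
      = Complex.Gamma s * hzeta s (a + 1) := by
  have hp (n : ℕ) : 0 < (n : ℝ) + (a + 1) := by linarith [n.cast_nonneg (α := ℝ)]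
  have hsum := hasSum_mellin (a := fun _ : ℕ ↦ (1 : ℂ)) (p := fun n ↦ n + (a + 1))
    (F := fun t ↦ ((rexp (-a * t) / (rexp t - 1) : ℝ) : ℂ)) (fun n ↦ Or.inr (hp n)) (by linarith)
    (fun t ht ↦ by simpa using Complex.hasSum_ofReal.mpr (hasSum_exp_neg_mul_div_exp_sub_one a ht))
    (((Real.summable_one_div_nat_add_rpow (a + 1) s.re).mpr hs).congr fun n ↦ by
      rw [abs_of_pos (hp n), norm_one])
  rw [← hsum.tsum_eq, hzeta, ← tsum_mul_left]
  refine tsum_congr fun n ↦ ?_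
  push_cast
  rw [Complex.cpow_neg, mul_one, div_eq_mul_inv]

theorem mellinConvergent_exp_neg_mul_div_exp_sub_one (ha : 0 < a) (hs : 1 < s.re) :
    MellinConvergent (fun t ↦ ((rexp (-a * t) / (rexp t - 1) : ℝ) : ℂ)) s := by
  refine Integrable.mono (hasMellin_exp_neg_mul_div_self ha hs).1 (by fun_prop) ?_
  filter_upwards [ae_restrict_mem measurableSet_Ioi] with t (ht : 0 < t)
  have hexp : t ≤ rexp t - 1 := by linarith [add_one_le_exp t]
  simp only [norm_smul, Complex.norm_real, norm_eq_abs]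
  gcongr
  exact div_nonneg (exp_nonneg _) (ht.le.trans hexp)

end MellinExp

theorem hermite_type_hurwitz_general (s : ℂ) (a : ℝ) (ha : 0 < a)
    (h1 : 1 < s.re) :
    hzeta s ((a:ℂ) + 1)
      = -(a:ℂ)^(-s)/2 + (a:ℂ)^(1-s)/(s-1)
        + (1/Complex.Gamma s) * ∫ x in Ioi (0:ℝ),
            ((Real.exp (-a*x) * (1/(Real.exp x - 1) - 1/x + 1/2) : ℝ) : ℂ) *
              (x:ℂ)^(s-1) := by
  have hG := mellinConvergent_exp_neg_mul_div_exp_sub_one ha h1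
  have hH := hasMellin_exp_neg_mul_div_self ha h1
  have hE := hasMellin_exp_neg_mul ha (s := s) (by linarith)
  have hGH := hasMellin_sub hG hH.1
  have hE' := hasMellin_const_smul hE.1 (1 / 2 : ℂ)
  have hsplit : (∫ x in Ioi (0:ℝ),
      ((rexp (-a*x) * (1/(rexp x - 1) - 1/x + 1/2) : ℝ) : ℂ) * (x:ℂ)^(s-1))
      = mellin (fun t ↦ ((rexp (-a * t) / (rexp t - 1) : ℝ) : ℂ) - ((rexp (-a * t) / t : ℝ) : ℂ)
          + (1 / 2 : ℂ) • ((rexp (-a * t) : ℝ) : ℂ)) s := by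
    simp only [mellin, smul_eq_mul]
    congr 1 with x
    push_cast
    ring
  have hs1 : s - 1 ≠ 0 := fun h ↦ by simp [sub_eq_zero.mp h] at h1
  have hΓ : Complex.Gamma s = (s - 1) * Complex.Gamma (s - 1) := by
    simpa using Complex.Gamma_add_one (s - 1) hs1
  have hΓ0 : Complex.Gamma s ≠ 0 := Complex.Gamma_ne_zero_of_re_pos (by linarith)
  rw [hsplit, (hasMellin_add hGH.1 hE'.1).2, hGH.2, hE'.2, hH.2, hE.2,
    mellin_exp_neg_mul_div_exp_sub_one (by linarith) h1]
  field_simp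
  rw [hΓ]
  ring

/-- Hermite-type formula: for `1 < Re(s) < 2` and real `a > 0`,
`ζ(s, a+1) = −a^{−s}/2 + a^{1−s}/(s−1)
  + (1/Γ(s)) ∫₀^∞ e^{−ax}(1/(e^x − 1) − 1/x + 1/2) x^{s−1} dx`. -/
theorem hermite_type_hurwitz (s : ℂ) (a : ℝ) (ha : 0 < a)
    (h1 : 1 < s.re) (h2 : s.re < 2) :
    hzeta s ((a:ℂ) + 1)
      = -(a:ℂ)^(-s)/2 + (a:ℂ)^(1-s)/(s-1)
        + (1/Complex.Gamma s) * ∫ x in Ioi (0:ℝ),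
            ((Real.exp (-a*x) * (1/(Real.exp x - 1) - 1/x + 1/2) : ℝ) : ℂ) *
              (x:ℂ)^(s-1) :=
  hermite_type_hurwitz_general s a ha h1
end

section
/- Define the generalized modified Bessel function ₁K_{z,w}(2x) := (2x^{−z}/w²) ∫₀^∞ u^{2z−1} e^{−u² − x²/u²} sin(wu) sin(wx/u) du for x > 0 and w ≠ 0. Then ₁K_{z,w}(2x) = 2x ∑_{n=0}^∞ ∑_{m=0}^∞ (−w²x)^{n+m} / ((2n+1)!(2m+1)!) · K_{n−m+z}(2x). -/
/-!
Since `e^{2s} + x² e^{-2s} = 2x cosh(2s - log x)`, the substitution `u = eˢ` turns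
`∫₀^∞ u^{2ν-1} e^{-p(u² + x²/u²)} du` into `∫_ℝ e^{2νs} e^{-2px cosh(2s - log x)} ds`,
which is `x^ν K_ν(2px)`. Multiplying out the Taylor series of `sin(wu)` and `sin(wx/u)`, the
`(n, m)` term of the integrand is a constant times such an integrand with `ν = n - m + z` and
`p = 1`. Termwise integration is justified by dominated convergence: the sum of the norms of the
terms is `‖u^{2z-1}‖ e^{-u²-x²/u²} sinh(‖w‖u) sinh(‖w‖x/u) ≤ e^{‖w‖²} ‖u^{2z-1}‖ e^{-(u²+x²/u²)/2}`,
integrable by the case `p = 1/2`.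
-/

open Real MeasureTheory Set

open scoped Complex

lemma sq_div_four_le_cosh (t : ℝ) : t ^ 2 / 4 ≤ cosh t := by
  have h := quadratic_le_exp_of_nonneg (abs_nonneg t)
  rw [← cosh_abs, cosh_eq, ← sq_abs t]
  nlinarith [exp_pos (-|t|), abs_nonneg t]

lemma integrable_exp_mul_sub_mul_cosh (a : ℝ) {y : ℝ} (hy : 0 < y) :
    Integrable fun t : ℝ => exp (a * t - y * cosh t) := by
  refine ((integrable_exp_neg_mul_sq (by positivity : 0 < y / 8)).const_mul
    (exp (2 * a ^ 2 / y))).mono' (by fun_prop) (ae_of_all _ fun t => ?_)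
  rw [norm_of_nonneg (exp_pos _).le, ← exp_add, exp_le_exp]
  have hcosh := mul_le_mul_of_nonneg_left (sq_div_four_le_cosh t) hy.le
  have hsq_nonneg : 0 ≤ (y * t - 4 * a) ^ 2 / (8 * y) := by positivity
  have hsq : (y * t - 4 * a) ^ 2 / (8 * y) = y * t ^ 2 / 8 - a * t + 2 * a ^ 2 / y := by
    field_simp; ring
  nlinarith

lemma integrable_cexp_mul_exp_neg_mul_cosh (ν : ℂ) {y : ℝ} (hy : 0 < y) :
    Integrable fun t : ℝ => cexp (ν * t) * (exp (-y * cosh t) : ℂ) := by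
  refine (integrable_exp_mul_sub_mul_cosh ν.re hy).mono' (by fun_prop) (ae_of_all _ fun t => ?_)
  rw [norm_mul, Complex.norm_exp, Complex.norm_real, norm_of_nonneg (exp_pos _).le, ← exp_add]
  simp [sub_eq_add_neg]

lemma integral_cexp_mul_exp_neg_mul_cosh (ν : ℂ) {y : ℝ} (hy : 0 < y) :
    ∫ t : ℝ, cexp (ν * t) * (exp (-y * cosh t) : ℂ) = 2 * besselK ν y := by
  have hint := integrable_cexp_mul_exp_neg_mul_cosh ν hy
  rw [← intervalIntegral.integral_Iic_add_Ioi (b := 0) hint.integrableOn hint.integrableOn,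
    ← neg_zero, ← integral_comp_neg_Ioi, neg_zero,
    ← integral_add (hint.comp_neg).integrableOn hint.integrableOn, besselK, ← integral_const_mul]
  refine setIntegral_congr_fun measurableSet_Ioi fun t _ => ?_
  have hE : ((exp (-y * cosh t) : ℝ) : ℂ) = cexp (-y * (cosh t : ℝ)) := by
    rw [Complex.ofReal_exp]; push_cast; ring_nf
  simp only [Complex.ofReal_neg, cosh_neg, mul_neg, hE]
  linear_combination (-cexp (-y * (cosh t : ℝ))) * Complex.two_cosh (ν * t)

lemma integrableOn_Ioi_zero_iff_integrable_exp_smul {E : Type*} [NormedAddCommGroup E]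
    [NormedSpace ℝ E] (g : ℝ → E) :
    IntegrableOn g (Ioi 0) ↔ Integrable fun s => exp s • g (exp s) := by
  have h := integrableOn_image_iff_integrableOn_abs_deriv_smul MeasurableSet.univ
    (fun s _ => (hasDerivAt_exp s).hasDerivWithinAt) exp_injective.injOn g
  simpa [abs_of_pos (exp_pos _)] using h

lemma integral_Ioi_zero_eq_integral_exp_smul {E : Type*} [NormedAddCommGroup E]
    [NormedSpace ℝ E] (g : ℝ → E) :
    ∫ u in Ioi 0, g u = ∫ s, exp s • g (exp s) := by
  have h := integral_image_eq_integral_abs_deriv_smul MeasurableSet.univ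
    (fun s _ => (hasDerivAt_exp s).hasDerivWithinAt) exp_injective.injOn g
  simpa [abs_of_pos (exp_pos _)] using h

lemma exp_sq_add_div_exp_sq {x : ℝ} (hx : 0 < x) (s : ℝ) :
    exp s ^ 2 + x ^ 2 / exp s ^ 2 = 2 * x * cosh (2 * s - log x) := by
  rw [cosh_eq, exp_sub, neg_sub, exp_sub, exp_log hx, ← exp_nat_mul]
  push_cast
  field_simp

lemma exp_smul_cpow_mul_exp_neg_mul_sq_add_div_sq (ν : ℂ) {p x : ℝ} (hx : 0 < x) (s : ℝ) :
    exp s • ((exp s : ℂ) ^ (2 * ν - 1) * (exp (-p * (exp s ^ 2 + x ^ 2 / exp s ^ 2)) : ℂ)) =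
      (x : ℂ) ^ ν *
        (cexp (ν * (2 * s - log x : ℝ)) * (exp (-(2 * p * x) * cosh (2 * s - log x)) : ℂ)) := by
  have hcpow (r : ℝ) (hr : 0 < r) (c : ℂ) : (r : ℂ) ^ c = cexp (log r * c) := by
    rw [Complex.cpow_def_of_ne_zero (by exact_mod_cast hr.ne'), Complex.ofReal_log hr.le]
  rw [exp_sq_add_div_exp_sq hx, hcpow _ (exp_pos s), hcpow _ hx, log_exp, Complex.real_smul]
  simp only [Complex.ofReal_exp, ← Complex.exp_add, ← mul_assoc]
  congr 1
  push_cast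
  ring

lemma integrableOn_cpow_mul_exp_neg_mul_sq_add_div_sq (ν : ℂ) {p x : ℝ} (hp : 0 < p)
    (hx : 0 < x) :
    IntegrableOn (fun u : ℝ => (u : ℂ) ^ (2 * ν - 1) * (exp (-p * (u ^ 2 + x ^ 2 / u ^ 2)) : ℂ))
      (Ioi 0) := by
  refine (integrableOn_Ioi_zero_iff_integrable_exp_smul _).2 ?_
  simp only [exp_smul_cpow_mul_exp_neg_mul_sq_add_div_sq ν hx]
  have hG := integrable_cexp_mul_exp_neg_mul_cosh ν (by positivity : 0 < 2 * p * x)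
  exact ((hG.comp_sub_right (log x)).comp_mul_left' two_ne_zero).const_mul _

lemma integral_cpow_mul_exp_neg_mul_sq_add_div_sq (ν : ℂ) {p x : ℝ} (hp : 0 < p) (hx : 0 < x) :
    ∫ u in Ioi (0 : ℝ), (u : ℂ) ^ (2 * ν - 1) * (exp (-p * (u ^ 2 + x ^ 2 / u ^ 2)) : ℂ) =
      (x : ℂ) ^ ν * besselK ν (2 * p * x) := by
  rw [integral_Ioi_zero_eq_integral_exp_smul]
  simp only [exp_smul_cpow_mul_exp_neg_mul_sq_add_div_sq ν hx]
  rw [integral_const_mul, Measure.integral_comp_mul_left (fun t => cexp (ν * (t - log x : ℝ)) *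
      (exp (-(2 * p * x) * cosh (t - log x)) : ℂ)) 2, integral_sub_right_eq_self
      (fun t : ℝ => cexp (ν * t) * (exp (-(2 * p * x) * cosh t) : ℂ)),
    integral_cexp_mul_exp_neg_mul_cosh ν (by positivity), abs_of_pos (by norm_num),
    Complex.real_smul]
  push_cast
  ring

noncomputable def sinTerm (z : ℂ) (n : ℕ) : ℂ :=
  (-1) ^ n * z ^ (2 * n + 1) / ((2 * n + 1).factorial : ℂ)

lemma continuous_sinTerm (n : ℕ) : Continuous fun z => sinTerm z n := by
  unfold sinTerm; fun_prop

lemma norm_sinTerm (z : ℂ) (n : ℕ) :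
    ‖sinTerm z n‖ = ‖z‖ ^ (2 * n + 1) / ((2 * n + 1).factorial : ℝ) := by
  simp [sinTerm]

lemma hasSum_sinTerm (z : ℂ) : HasSum (sinTerm z) (Complex.sin z) :=
  Complex.hasSum_sin z

lemma hasSum_norm_sinTerm (z : ℂ) : HasSum (fun n => ‖sinTerm z n‖) (sinh ‖z‖) := by
  simpa only [norm_sinTerm] using Real.hasSum_sinh ‖z‖

lemma hasSum_sinTerm_mul_sinTerm (a b : ℂ) :
    HasSum (fun p : ℕ × ℕ => sinTerm a p.1 * sinTerm b p.2) (Complex.sin a * Complex.sin b) :=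
  (hasSum_sinTerm a).mul (hasSum_sinTerm b) <|
    summable_mul_of_summable_norm (hasSum_norm_sinTerm a).summable (hasSum_norm_sinTerm b).summable

lemma hasSum_norm_sinTerm_mul_sinTerm (a b : ℂ) :
    HasSum (fun p : ℕ × ℕ => ‖sinTerm a p.1 * sinTerm b p.2‖) (sinh ‖a‖ * sinh ‖b‖) := by
  have hsummable (z : ℂ) : Summable fun n => ‖‖sinTerm z n‖‖ := by
    simpa only [norm_norm] using (hasSum_norm_sinTerm z).summable
  simpa only [norm_mul] using (hasSum_norm_sinTerm a).mul (hasSum_norm_sinTerm b)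
    (summable_mul_of_summable_norm (hsummable a) (hsummable b))

lemma hasSum_integral_mul_sinTerm_mul_sinTerm {α : Type*} [MeasurableSpace α] {μ : Measure α}
    {k a b : α → ℂ} (hk : AEStronglyMeasurable k μ) (ha : AEStronglyMeasurable a μ)
    (hb : AEStronglyMeasurable b μ)
    (hint : Integrable (fun u => ‖k u‖ * (sinh ‖a u‖ * sinh ‖b u‖)) μ) :
    HasSum (fun p : ℕ × ℕ => ∫ u, k u * sinTerm (a u) p.1 * sinTerm (b u) p.2 ∂μ)
      (∫ u, k u * Complex.sin (a u) * Complex.sin (b u) ∂μ) := by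
  have hnorm (u : α) : HasSum (fun p : ℕ × ℕ => ‖k u * sinTerm (a u) p.1 * sinTerm (b u) p.2‖)
      (‖k u‖ * (sinh ‖a u‖ * sinh ‖b u‖)) := by
    simpa only [norm_mul, mul_assoc] using
      (hasSum_norm_sinTerm_mul_sinTerm (a u) (b u)).mul_left ‖k u‖
  refine hasSum_integral_of_dominated_convergence
    (fun p u => ‖k u * sinTerm (a u) p.1 * sinTerm (b u) p.2‖) (fun p => ?_)
    (fun p => ae_of_all _ fun u => le_rfl) (ae_of_all _ fun u => (hnorm u).summable)
    (hint.congr (ae_of_all _ fun u => (hnorm u).tsum_eq.symm))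
    (ae_of_all _ fun u => ?_)
  · exact (hk.mul ((continuous_sinTerm p.1).comp_aestronglyMeasurable ha)).mul
      ((continuous_sinTerm p.2).comp_aestronglyMeasurable hb)
  · simpa only [mul_assoc] using (hasSum_sinTerm_mul_sinTerm (a u) (b u)).mul_left (k u)

lemma sinh_mul_le_exp (b s : ℝ) : sinh (b * s) ≤ exp ((b ^ 2 + s ^ 2) / 2) := by
  have hexp : exp (b * s) ≤ exp ((b ^ 2 + s ^ 2) / 2) :=
    exp_le_exp.2 (by nlinarith [sq_nonneg (b - s)])
  rw [sinh_eq]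
  linarith [exp_pos (-(b * s)), exp_pos (b * s)]

lemma integrableOn_norm_cpow_mul_exp_mul_sinh_mul_sinh (z w : ℂ) {x : ℝ} (hx : 0 < x) :
    IntegrableOn (fun u : ℝ => ‖(u : ℂ) ^ (2 * z - 1) * (exp (-u ^ 2 - x ^ 2 / u ^ 2) : ℂ)‖ *
      (sinh ‖w * u‖ * sinh ‖w * x / u‖)) (Ioi 0) := by
  have hmajor := (integrableOn_cpow_mul_exp_neg_mul_sq_add_div_sq z one_half_pos hx).norm.const_mul
    (exp (‖w‖ ^ 2))
  refine hmajor.mono' (by fun_prop) ?_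
  rw [ae_restrict_iff' measurableSet_Ioi]
  filter_upwards with u hu
  have hu : 0 < u := hu
  have hwu : ‖w * u‖ = ‖w‖ * u := by rw [norm_mul, Complex.norm_real, norm_of_nonneg hu.le]
  have hwxu : ‖w * x / u‖ = ‖w‖ * (x / u) := by
    rw [mul_div_assoc, norm_mul, ← Complex.ofReal_div, Complex.norm_real,
      norm_of_nonneg (by positivity)]
  simp only [norm_mul, Complex.norm_real, norm_norm, norm_of_nonneg (exp_pos _).le, hwu, hwxu]
  rw [norm_of_nonneg (sinh_nonneg_iff.2 (by positivity)),
    norm_of_nonneg (sinh_nonneg_iff.2 (by positivity))]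
  have hexp : exp (-u ^ 2 - x ^ 2 / u ^ 2) *
      (exp ((‖w‖ ^ 2 + u ^ 2) / 2) * exp ((‖w‖ ^ 2 + (x / u) ^ 2) / 2)) =
      exp (‖w‖ ^ 2) * exp (-(1 / 2) * (u ^ 2 + x ^ 2 / u ^ 2)) := by
    simp only [← exp_add]
    congr 1
    ring
  calc _ ≤ ‖(u : ℂ) ^ (2 * z - 1)‖ * exp (-u ^ 2 - x ^ 2 / u ^ 2) *
        (exp ((‖w‖ ^ 2 + u ^ 2) / 2) * exp ((‖w‖ ^ 2 + (x / u) ^ 2) / 2)) := by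
        gcongr <;> exact sinh_mul_le_exp _ _
    _ = _ := by linear_combination ‖(u : ℂ) ^ (2 * z - 1)‖ * hexp

lemma cpow_mul_sinTerm_mul_sinTerm (z w x : ℂ) {u : ℂ} (hu : u ≠ 0) (n m : ℕ) :
    u ^ (2 * z - 1) * sinTerm (w * u) n * sinTerm (w * x / u) m =
      (-1) ^ (n + m) * w ^ (2 * n + 2 * m + 2) * x ^ (2 * m + 1) /
        ((2 * n + 1).factorial * (2 * m + 1).factorial) * u ^ (2 * ((n : ℂ) - m + z) - 1) := by
  have hexp : 2 * ((n : ℂ) - m + z) - 1 = 2 * z - 1 + (((2 * n : ℕ) - (2 * m : ℕ) : ℤ) : ℂ) := by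
    push_cast; ring
  rw [hexp, Complex.cpow_add _ _ hu, Complex.cpow_intCast, zpow_sub₀ hu, zpow_natCast,
    zpow_natCast]
  simp only [sinTerm, div_pow, mul_pow]
  field_simp
  ring

lemma integral_cpow_mul_exp_mul_sinTerm_mul_sinTerm (z w : ℂ) {x : ℝ} (hx : 0 < x) (n m : ℕ) :
    ∫ u in Ioi (0 : ℝ), (u : ℂ) ^ (2 * z - 1) * (exp (-u ^ 2 - x ^ 2 / u ^ 2) : ℂ) *
        sinTerm (w * u) n * sinTerm (w * x / u) m =
      (-1) ^ (n + m) * w ^ (2 * n + 2 * m + 2) * (x : ℂ) ^ (2 * m + 1) /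
        ((2 * n + 1).factorial * (2 * m + 1).factorial) *
        ((x : ℂ) ^ ((n : ℂ) - m + z) * besselK ((n : ℂ) - m + z) (2 * x)) := by
  have hkernel := integral_cpow_mul_exp_neg_mul_sq_add_div_sq ((n : ℂ) - m + z) one_pos hx
  simp only [neg_mul, one_mul, neg_add', Complex.ofReal_one, mul_one] at hkernel
  rw [← hkernel, ← integral_const_mul]
  refine setIntegral_congr_fun measurableSet_Ioi fun u hu => ?_
  have hu : (u : ℂ) ≠ 0 := by exact_mod_cast (mem_Ioi.1 hu).ne'
  rw [mul_right_comm _ _ (sinTerm _ n), mul_right_comm _ _ (sinTerm _ m),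
    cpow_mul_sinTerm_mul_sinTerm z w x hu]
  ring

/-- With `₁K_{z,w}(2x) := (2x^{−z}/w²)∫₀^∞ u^{2z−1} e^{−u²−x²/u²} sin(wu) sin(wx/u) du`,
one has `₁K_{z,w}(2x) = 2x ∑_{n,m≥0} (−w²x)^{n+m}/((2n+1)!(2m+1)!) K_{n−m+z}(2x)`. -/
theorem oneK_double_series (z w : ℂ) (hw : w ≠ 0) (x : ℝ) (hx : 0 < x) :
    (2 * (x:ℂ)^(-z) / w^2) *
      ∫ u in Ioi (0:ℝ),
        (u:ℂ)^(2*z-1 : ℂ) * (Real.exp (-u^2 - x^2/u^2) : ℂ) *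
          Complex.sin (w * u) * Complex.sin (w * x / u)
      = 2 * (x:ℂ) * ∑' n : ℕ, ∑' m : ℕ,
          (-w^2 * x)^(n+m) / (((2*n+1).factorial : ℂ) * ((2*m+1).factorial : ℂ))
            * besselK ((n:ℂ) - (m:ℂ) + z) (2*(x:ℂ)) := by
  have hxC : (x : ℂ) ≠ 0 := by exact_mod_cast hx.ne'
  have hxz : (x : ℂ) ^ z ≠ 0 := Complex.cpow_ne_zero_iff.2 (Or.inl hxC)
  have hterm (p : ℕ × ℕ) : 2 * (x : ℂ) ^ (-z) / w ^ 2 *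
      ∫ u in Ioi (0 : ℝ), (u : ℂ) ^ (2 * z - 1) * (exp (-u ^ 2 - x ^ 2 / u ^ 2) : ℂ) *
        sinTerm (w * u) p.1 * sinTerm (w * x / u) p.2 =
      2 * x * ((-w ^ 2 * x) ^ (p.1 + p.2) /
        (((2 * p.1 + 1).factorial : ℂ) * ((2 * p.2 + 1).factorial : ℂ)) *
          besselK ((p.1 : ℂ) - p.2 + z) (2 * x)) := by
    rw [integral_cpow_mul_exp_mul_sinTerm_mul_sinTerm z w hx, Complex.cpow_add _ _ hxC,
      Complex.cpow_sub _ _ hxC, Complex.cpow_natCast, Complex.cpow_natCast, Complex.cpow_neg]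
    field_simp
    ring
  have hmeas : Measurable fun u : ℝ => w * x / u := by fun_prop
  have hsum := (hasSum_integral_mul_sinTerm_mul_sinTerm (μ := volume.restrict (Ioi 0))
    (k := fun u : ℝ => (u : ℂ) ^ (2 * z - 1) * (exp (-u ^ 2 - x ^ 2 / u ^ 2) : ℂ))
    (a := fun u : ℝ => w * u) (b := fun u : ℝ => w * x / u) (by fun_prop) (by fun_prop)
    hmeas.aestronglyMeasurable (integrableOn_norm_cpow_mul_exp_mul_sinh_mul_sinh z w hx)).mul_left
      (2 * (x : ℂ) ^ (-z) / w ^ 2)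
  simp only [hterm] at hsum
  rw [← hsum.tsum_eq, hsum.summable.tsum_prod]
  simp_rw [tsum_mul_left]
end
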